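/- arXiv:2003.02329 — 9 statements merged into one kernel-verified Lean document; each statement's English description precedes it below -/
import Mathlib

section
/- Let G be a profinite group, let (I, ≤) be a directed partially ordered set, and let (P_i)_{i∈I} be a family of closed subgroups of G such that P_i ⊆ P_j whenever i ≤ j. If every P_i is pronilpotent (as a profinite group with the subspace topology), then the topological closure in G of the union ⋃_{i∈I} P_i is a pronilpotent closed subgroup of G. -/
/-- A topological group `P` is pronilpotent if the quotient by every open normal subgroup is
nilpotent. -/
def IsPronilpotent (P : Type*) [Group P] [TopologicalSpace P] : Prop :=
  ∀ (N : Subgroup P) [N.Normal], IsOpen (N : Set P) → Group.IsNilpotent (P ⧸ N)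

/-- In a profinite group `G`, the topological closure of a directed union of closed
pronilpotent subgroups is a pronilpotent closed subgroup. -/
theorem closure_directed_union_pronilpotent
    (G : Type*) [Group G] [TopologicalSpace G] [IsTopologicalGroup G]
    [CompactSpace G] [T2Space G] [TotallyDisconnectedSpace G]
    (I : Type*) [Preorder I] [IsDirected I (· ≤ ·)] [Nonempty I]
    (P : I → Subgroup G)
    (hmono : ∀ i j : I, i ≤ j → P i ≤ P j)
    (hclosed : ∀ i : I, IsClosed ((P i : Set G)))
    (hnil : ∀ i : I, IsPronilpotent (P i)) :
    ∃ H : Subgroup G, (H : Set G) = closure (⋃ i : I, (P i : Set G)) ∧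
      IsClosed (H : Set G) ∧ IsPronilpotent H := by
  have hdir : Directed (· ≤ ·) P := fun i j => by
    obtain ⟨k, hik, hjk⟩ := exists_ge_ge i j
    exact ⟨k, hmono i k hik, hmono j k hjk⟩
  set H : Subgroup G := (⨆ i, P i).topologicalClosure with hH
  have hcoe : (H : Set G) = closure (⋃ i : I, (P i : Set G)) := by
    rw [hH, Subgroup.topologicalClosure_coe, Subgroup.coe_iSup_of_directed hdir]
  refine ⟨H, hcoe, by rw [hcoe]; exact isClosed_closure, ?_⟩
  -- H is compact
  haveI : CompactSpace H := isCompact_iff_compactSpace.mp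
    (by rw [hcoe]; exact isClosed_closure.isCompact)
  intro N _ hNopen
  haveI : Finite (H ⧸ N) := N.quotient_finite_of_isOpen hNopen
  -- inclusions
  have hle : ∀ i, P i ≤ H := fun i => (le_iSup P i).trans (Subgroup.le_topologicalClosure _)
  -- for each q : H ⧸ N, exists i and x ∈ P i mapping to q
  have key : ∀ q : H ⧸ N, ∃ i : I,
      q ∈ ((QuotientGroup.mk' N).comp (Subgroup.inclusion (hle i))).range := by
    intro q
    obtain ⟨h, rfl⟩ := QuotientGroup.mk'_surjective N q
    -- the coset h * N is open in H
    have hopen : IsOpen {y : H | h⁻¹ * y ∈ N} := by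
      have : Continuous fun y : H => h⁻¹ * y := continuous_const.mul continuous_id
      exact hNopen.preimage this
    -- density argument
    have hd : ((h : G) : G) ∈ closure (⋃ i : I, (P i : Set G)) := by
      rw [← hcoe]; exact h.2
    -- {y : H | h⁻¹ * y ∈ N} is an open nbhd of h; pull to G
    obtain ⟨W, hWopen, hWeq⟩ := isOpen_induced_iff.mp hopen
    have hhW : (h : G) ∈ W := by
      have : h ∈ {y : H | h⁻¹ * y ∈ N} := by simp [N.one_mem]
      rw [← hWeq] at this; exact this
    obtain ⟨z, hzW, hzU⟩ := mem_closure_iff.mp hd W hWopen hhW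
    obtain ⟨s, ⟨i, rfl⟩, hzi⟩ := hzU
    refine ⟨i, ⟨⟨z, hzi⟩, ?_⟩⟩
    have hz : (⟨z, (hle i) hzi⟩ : H) ∈ {y : H | h⁻¹ * y ∈ N} := by
      rw [← hWeq]; exact hzW
    simp only [QuotientGroup.mk'_apply, MonoidHom.comp_apply]
    have : (Subgroup.inclusion (hle i)) ⟨z, hzi⟩ = ⟨z, (hle i) hzi⟩ := rfl
    rw [this]
    exact ((QuotientGroup.eq).mpr hz).symm
  -- choose a common index
  haveI : Fintype (H ⧸ N) := Fintype.ofFinite _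
  classical
  choose idx hidx using key
  obtain ⟨j, hj⟩ := Finset.exists_le (Finset.univ.image (fun q : H ⧸ N => idx q))
  -- the map from P j is surjective
  set f : P j →* H ⧸ N := (QuotientGroup.mk' N).comp (Subgroup.inclusion (hle j)) with hf
  have hsurj : Function.Surjective f := by
    intro q
    have hq : q ∈ ((QuotientGroup.mk' N).comp (Subgroup.inclusion (hle (idx q)))).range := hidx q
    obtain ⟨x, hx⟩ := hq
    have hle' : idx q ≤ j := hj _ (Finset.mem_image_of_mem _ (Finset.mem_univ q))
    refine ⟨Subgroup.inclusion (hmono _ _ hle') x, ?_⟩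
    rw [hf]
    exact hx
  -- kernel is open
  have hker : IsOpen ((f.ker : Set (P j))) := by
    have hcont : Continuous (Subgroup.inclusion (hle j) : P j → H) :=
      Continuous.subtype_mk (continuous_subtype_val) _
    have : (f.ker : Set (P j)) = (Subgroup.inclusion (hle j)) ⁻¹' (N : Set H) := by
      ext x
      simp [hf, MonoidHom.mem_ker, QuotientGroup.eq_one_iff]
    rw [this]
    exact hNopen.preimage hcont
  haveI : Group.IsNilpotent (P j ⧸ f.ker) := hnil j f.ker hker
  exact nilpotent_of_surjective _ (MulEquiv.surjective
    (QuotientGroup.quotientKerEquivOfSurjective f hsurj))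
end

section
/- Let p be a prime, let G be a profinite group, let (I, ≤) be a directed partially ordered set, and let (P_i)_{i∈I} be a family of closed subgroups of G such that P_i ⊆ P_j whenever i ≤ j. If every P_i is a pro-p group (as a profinite group with the subspace topology), then the topological closure in G of the union ⋃_{i∈I} P_i is a closed pro-p subgroup of G. -/
/-- A topological group `P` is pro-`p` if the quotient by every open normal subgroup is a
finite `p`-group. -/
def IsProPGroup (p : ℕ) (P : Type*) [Group P] [TopologicalSpace P] : Prop :=
  ∀ (N : Subgroup P) [N.Normal], IsOpen (N : Set P) → Finite (P ⧸ N) ∧ IsPGroup p (P ⧸ N)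

/-- In a profinite group `G`, the topological closure of a directed union of closed pro-`p`
subgroups is a closed pro-`p` subgroup. -/
theorem closure_directed_union_proP
    (p : ℕ) (hp : p.Prime)
    (G : Type*) [Group G] [TopologicalSpace G] [IsTopologicalGroup G]
    [CompactSpace G] [T2Space G] [TotallyDisconnectedSpace G]
    (I : Type*) [Preorder I] [IsDirected I (· ≤ ·)] [Nonempty I]
    (P : I → Subgroup G)
    (hmono : ∀ i j : I, i ≤ j → P i ≤ P j)
    (hclosed : ∀ i : I, IsClosed ((P i : Set G)))
    (hproP : ∀ i : I, IsProPGroup p (P i)) :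
    ∃ H : Subgroup G, (H : Set G) = closure (⋃ i : I, (P i : Set G)) ∧
      IsClosed (H : Set G) ∧ IsProPGroup p H := by
  have hdir : Directed (· ≤ ·) P := fun i j => by
    obtain ⟨k, hik, hjk⟩ := exists_ge_ge i j
    exact ⟨k, hmono i k hik, hmono j k hjk⟩
  set K : Subgroup G := ⨆ i, P i with hK
  have hKU : (K : Set G) = ⋃ i, (P i : Set G) := Subgroup.coe_iSup_of_directed hdir
  refine ⟨K.topologicalClosure, by rw [Subgroup.topologicalClosure_coe, hKU],
    K.isClosed_topologicalClosure, ?_⟩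
  set H : Subgroup G := K.topologicalClosure with hH
  have hHclosed : IsClosed (H : Set G) := K.isClosed_topologicalClosure
  have hHcompact : CompactSpace H := isCompact_iff_compactSpace.mp hHclosed.isCompact
  intro N _ hNopen
  refine ⟨N.quotient_finite_of_isOpen hNopen, ?_⟩
  intro x
  -- the union is dense in H
  have hdense : Dense ((Subtype.val : H → G) ⁻¹' (⋃ i, (P i : Set G))) := by
    intro h
    rw [closure_subtype]
    have himg : (Subtype.val : H → G) '' ((Subtype.val : H → G) ⁻¹' (⋃ i, (P i : Set G)))
        = (⋃ i, (P i : Set G)) := by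
      apply Set.image_preimage_eq_of_subset
      rw [Set.subset_def]
      intro g hg
      have : g ∈ K := by rw [← SetLike.mem_coe, hKU]; exact hg
      exact ⟨⟨g, K.le_topologicalClosure this⟩, rfl⟩
    rw [himg]
    have : (h : G) ∈ (H : Set G) := h.2
    rwa [Subgroup.topologicalClosure_coe, hKU] at this
  -- the fiber of x is open and nonempty
  have : DiscreteTopology (H ⧸ N) := QuotientGroup.discreteTopology hNopen
  have hfiber : IsOpen ((QuotientGroup.mk : H → H ⧸ N) ⁻¹' {x}) :=
    (isOpen_discrete {x}).preimage continuous_quot_mk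
  obtain ⟨h, hhx, hhU⟩ := hdense.inter_open_nonempty _ hfiber ⟨x.out, QuotientGroup.out_eq' x⟩
  replace hhx : (QuotientGroup.mk h : H ⧸ N) = x := hhx
  rw [Set.mem_preimage, Set.mem_iUnion] at hhU
  obtain ⟨i, hi⟩ := hhU
  -- work inside P i
  have hPi : P i ≤ H := (le_iSup P i).trans K.le_topologicalClosure
  let f : (P i) →* H := Subgroup.inclusion hPi
  have hfcont : Continuous f := Continuous.subtype_mk continuous_subtype_val _
  have hPic : CompactSpace (P i) := isCompact_iff_compactSpace.mp (hclosed i).isCompact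
  have hMopen : IsOpen ((N.comap f : Subgroup (P i)) : Set (P i)) := hNopen.preimage hfcont
  obtain ⟨M', hM'⟩ := IsTopologicalGroup.exist_openNormalSubgroup_sub_clopen_nhds_of_one
    ⟨(N.comap f).isClosed_of_isOpen hMopen, hMopen⟩ (N.comap f).one_mem
  obtain ⟨-, hpg⟩ := hproP i M'.toSubgroup M'.isOpen
  set g : (P i) := ⟨(h : G), hi⟩ with hg
  obtain ⟨k, hk⟩ := hpg (QuotientGroup.mk g)
  refine ⟨k, ?_⟩
  have hgk : g ^ p ^ k ∈ N.comap f := by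
    apply hM'
    rwa [← QuotientGroup.mk_pow, QuotientGroup.eq_one_iff] at hk
  have hfg : f g = h := Subtype.ext rfl
  have : h ^ p ^ k ∈ N := by
    have := hgk
    rw [Subgroup.mem_comap, map_pow, hfg] at this
    exact this
  calc x ^ p ^ k = (QuotientGroup.mk h : H ⧸ N) ^ p ^ k := by rw [hhx]
    _ = QuotientGroup.mk (h ^ p ^ k) := by rw [QuotientGroup.mk_pow]
    _ = 1 := (QuotientGroup.eq_one_iff _).mpr this
end

section
/- Let H be a profinite group of finite rank and let P be a projective profinite group such that there exists some continuous Frattini cover P → H (so that P, together with such a map, is the universal Frattini cover of H). Then every continuous surjective group homomorphism π : P → H is a Frattini cover. -/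
universe u

/-- A topological group has rank `r` (a natural number) if `r` is the least cardinality of a
subset generating a dense subgroup. -/
def HasProfiniteRank (G : Type*) [Group G] [TopologicalSpace G] (r : ℕ) : Prop :=
  (∃ S : Set G, Cardinal.mk S = (r : Cardinal) ∧
    Dense ((Subgroup.closure S : Subgroup G) : Set G)) ∧
  ∀ S : Set G, Dense ((Subgroup.closure S : Subgroup G) : Set G) → (r : Cardinal) ≤ Cardinal.mk S

/-- A continuous surjective homomorphism of topological groups is a Frattini cover if
every closed subgroup of the source mapping onto the target is the whole source group. -/
def IsFrattiniCover {G H : Type*} [Group G] [Group H] [TopologicalSpace G]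
    (φ : G →* H) : Prop :=
  Function.Surjective φ ∧
    ∀ K : Subgroup G, IsClosed (K : Set G) → Subgroup.map φ K = ⊤ → K = ⊤

/-- A profinite group `P` is projective if every continuous homomorphism from `P` to a
profinite group `A` lifts along every continuous surjection `B → A` of profinite groups. -/
def IsProjectiveProfinite (P : Type u) [Group P] [TopologicalSpace P] : Prop :=
  ∀ (B A : Type u) [Group B] [TopologicalSpace B] [IsTopologicalGroup B]
      [CompactSpace B] [T2Space B] [TotallyDisconnectedSpace B]
      [Group A] [TopologicalSpace A] [IsTopologicalGroup A]
      [CompactSpace A] [T2Space A] [TotallyDisconnectedSpace A]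
      (α : B →* A), Continuous α → Function.Surjective α →
    ∀ φ : P →* A, Continuous φ → ∃ ψ : P →* B, Continuous ψ ∧ α.comp ψ = φ

section AuxLemmas

variable {G : Type*} [Group G] [TopologicalSpace G] [IsTopologicalGroup G]

/-- For a closed subgroup `U`, the set of `g` sending a fixed coset to another fixed coset
is closed. -/
lemma auxClosedSmul (U : Subgroup G) (hU : IsClosed (U : Set G)) (x y : G ⧸ U) :
    IsClosed {g : G | g • x = y} := by
  obtain ⟨b, rfl⟩ := QuotientGroup.mk_surjective x
  obtain ⟨c, rfl⟩ := QuotientGroup.mk_surjective y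
  have he : {g : G | g • (QuotientGroup.mk b : G ⧸ U) = QuotientGroup.mk c}
      = (fun g => (g * b)⁻¹ * c) ⁻¹' (U : Set G) := by
    ext g
    simp only [Set.mem_setOf_eq, Set.mem_preimage, SetLike.mem_coe,
      MulAction.Quotient.smul_mk, smul_eq_mul, QuotientGroup.eq]
  rw [he]
  exact hU.preimage (by continuity)

/-- A topologically finitely generated topological group has only finitely many open
subgroups of a given (nonzero) index. -/
lemma finiteOpenOfIndex (T : Set G) (hTfin : T.Finite)
    (hdense : Dense ((Subgroup.closure T : Subgroup G) : Set G)) (n : ℕ) (hn : n ≠ 0) :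
    {U : Subgroup G | IsOpen (U : Set G) ∧ U.index = n}.Finite := by
  rw [← Set.finite_coe_iff]
  set S := {U : Subgroup G | IsOpen (U : Set G) ∧ U.index = n} with hS
  have hfin : ∀ U : S, Finite (G ⧸ (U : Subgroup G)) := by
    intro U
    apply Nat.finite_of_card_ne_zero
    rw [← Subgroup.index]
    rw [U.2.2]; exact hn
  have hcard : ∀ U : S, Nat.card (G ⧸ (U : Subgroup G)) = n := fun U => U.2.2
  let e : ∀ U : S, (G ⧸ (U : Subgroup G)) ≃ Fin n := fun U =>
    @Finite.equivFinOfCardEq _ (hfin U) n (hcard U)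
  let σ : ∀ U : S, G → Fin n → Fin n := fun U g i => e U (g • (e U).symm i)
  have σ_mul : ∀ (U : S) (g h : G) (i : Fin n), σ U (g * h) i = σ U g (σ U h i) := by
    intro U g h i
    simp only [σ, Equiv.symm_apply_apply, mul_smul]
  have σ_one : ∀ (U : S) (i : Fin n), σ U 1 i = i := by
    intro U i
    simp only [σ, one_smul, Equiv.apply_symm_apply]
  have σ_inj : ∀ (U : S) (g : G), Function.Injective (σ U g) := by
    intro U g i j hij
    simpa [σ] using ((e U).symm.injective ((MulAction.injective g) ((e U).injective hij)))
  have hTsub : Finite T := hTfin.to_subtype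
  let F : S → (T → Fin n → Fin n) × Fin n :=
    fun U => (fun t => σ U t, e U (QuotientGroup.mk 1))
  refine Finite.of_injective F ?_
  intro U V hUV
  have h1 : ∀ t : T, σ U t = σ V t := fun t => congrFun (congrArg Prod.fst hUV) t
  have h2 : e U (QuotientGroup.mk 1) = e V (QuotientGroup.mk 1) := congrArg Prod.snd hUV
  let E : Subgroup G := {
    carrier := {g : G | ∀ i, σ U g i = σ V g i}
    one_mem' := fun i => by rw [σ_one, σ_one]
    mul_mem' := by
      intro g h hg hh i
      rw [σ_mul, σ_mul, hg, hh]
    inv_mem' := by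
      intro g hg i
      have ha : σ U g (σ U g⁻¹ i) = i := by rw [← σ_mul, mul_inv_cancel, σ_one]
      have hb : σ V g (σ V g⁻¹ i) = i := by rw [← σ_mul, mul_inv_cancel, σ_one]
      apply σ_inj V g
      rw [hb, ← hg (σ U g⁻¹ i)]
      exact ha }
  have hEclosed : IsClosed (E : Set G) := by
    have : (E : Set G) = ⋂ i : Fin n, ⋃ j : Fin n,
        ({g : G | g • (e U).symm i = (e U).symm j} ∩
          {g : G | g • (e V).symm i = (e V).symm j}) := by
      ext g
      simp only [Set.mem_iInter, Set.mem_iUnion, Set.mem_inter_iff, Set.mem_setOf_eq]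
      constructor
      · intro hg i
        refine ⟨σ U g i, ?_, ?_⟩
        · exact ((e U).symm_apply_apply _).symm
        · rw [hg i]
          exact ((e V).symm_apply_apply _).symm
      · intro hg i
        obtain ⟨j, hj1, hj2⟩ := hg i
        simp only [σ, hj1, hj2, Equiv.apply_symm_apply]
    rw [this]
    refine isClosed_iInter fun i => isClosed_iUnion_of_finite fun j =>
      IsClosed.inter (auxClosedSmul _ (Subgroup.isClosed_of_isOpen _ U.2.1) _ _)
        (auxClosedSmul _ (Subgroup.isClosed_of_isOpen _ V.2.1) _ _)
  have hTE : Subgroup.closure T ≤ E := by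
    rw [Subgroup.closure_le]
    intro t ht i
    exact congrFun (h1 ⟨t, ht⟩) i
  have hEtop : ∀ g : G, ∀ i, σ U g i = σ V g i := by
    have : (E : Set G) = Set.univ := by
      apply Set.eq_univ_of_univ_subset
      rw [← hdense.closure_eq]
      exact closure_minimal hTE hEclosed
    intro g
    exact (this ▸ Set.mem_univ g : g ∈ (E : Set G))
  have key : ∀ (W : S) (g : G), g ∈ (W : Subgroup G) ↔
      σ W g (e W (QuotientGroup.mk 1)) = e W (QuotientGroup.mk 1) := by
    intro W g
    simp only [σ, Equiv.symm_apply_apply]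
    rw [(e W).apply_eq_iff_eq]
    have : g • (QuotientGroup.mk 1 : G ⧸ (W : Subgroup G)) = QuotientGroup.mk g := by
      rw [MulAction.Quotient.smul_mk, smul_eq_mul, mul_one]
    rw [this, QuotientGroup.eq]
    simp
  apply Subtype.ext
  ext g
  rw [key U g, key V g, hEtop g, h2]

/-- A topologically finitely generated profinite group is Hopfian: every continuous
surjective endomorphism is injective. -/
lemma hopfian {G : Type*} [Group G] [TopologicalSpace G] [IsTopologicalGroup G]
    [CompactSpace G] [T2Space G] [TotallyDisconnectedSpace G]
    (T : Set G) (hTfin : T.Finite)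
    (hdense : Dense ((Subgroup.closure T : Subgroup G) : Set G))
    (ψ : G →* G) (hc : Continuous ψ) (hs : Function.Surjective ψ) :
    Function.Injective ψ := by
  rw [injective_iff_map_eq_one ψ]
  intro x hx
  by_contra hne
  have hopen : IsOpen ({x}ᶜ : Set G) := isOpen_compl_singleton
  have h1 : (1 : G) ∈ ({x}ᶜ : Set G) := by
    simp only [Set.mem_compl_iff, Set.mem_singleton_iff]
    exact fun h => hne h.symm
  obtain ⟨W, hWclopen, h1W, hWsub⟩ := compact_exists_isClopen_in_isOpen hopen h1
  obtain ⟨N, hN⟩ := IsTopologicalGroup.exist_openSubgroup_sub_clopen_nhds_of_one hWclopen h1W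
  have hxN : x ∉ (N : Set G) := fun h => (hWsub (hN h)) rfl
  have hfinq : Finite (G ⧸ N.toSubgroup) := Subgroup.quotient_finite_of_isOpen _ N.isOpen
  have hn : N.toSubgroup.index ≠ 0 := Subgroup.index_ne_zero_of_finite
  set n := N.toSubgroup.index with hndef
  have hSfin : {U : Subgroup G | IsOpen (U : Set G) ∧ U.index = n}.Finite :=
    finiteOpenOfIndex T hTfin hdense n hn
  set S := {U : Subgroup G | IsOpen (U : Set G) ∧ U.index = n} with hSdef
  have : Finite S := hSfin.to_subtype
  have hNS : N.toSubgroup ∈ S := ⟨N.isOpen, rfl⟩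
  let f : S → S := fun U => ⟨Subgroup.comap ψ U.1,
    by
      constructor
      · have : ((Subgroup.comap ψ U.1 : Subgroup G) : Set G) = ψ ⁻¹' (U.1 : Set G) := rfl
        rw [this]
        exact U.2.1.preimage hc
      · rw [Subgroup.index_comap_of_surjective _ hs]
        exact U.2.2⟩
  have hfinj : Function.Injective f := by
    intro U V h
    exact Subtype.ext (Subgroup.comap_injective hs (congrArg Subtype.val h))
  have hfsurj : Function.Surjective f := Finite.injective_iff_surjective.mp hfinj
  obtain ⟨U, hU⟩ := hfsurj ⟨N.toSubgroup, hNS⟩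
  have hker : ψ.ker ≤ N.toSubgroup := by
    have : Subgroup.comap ψ U.1 = N.toSubgroup := congrArg Subtype.val hU
    rw [← this]
    exact fun g hg => by
      simp only [Subgroup.mem_comap]
      rw [MonoidHom.mem_ker.mp hg]
      exact (U.1).one_mem
  exact hxN (hker (MonoidHom.mem_ker.mpr hx))

end AuxLemmas

/-- If `H` is a profinite group of finite rank and `P` is a projective profinite group
admitting some continuous Frattini cover `P → H` (i.e. `P` is the universal Frattini cover
of `H`), then every continuous surjective homomorphism `π : P → H` is a Frattini cover. -/
theorem every_epi_from_universal_frattini_cover_is_frattini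
    (P H : Type u)
    [Group P] [TopologicalSpace P] [IsTopologicalGroup P]
    [CompactSpace P] [T2Space P] [TotallyDisconnectedSpace P]
    [Group H] [TopologicalSpace H] [IsTopologicalGroup H]
    [CompactSpace H] [T2Space H] [TotallyDisconnectedSpace H]
    (r : ℕ) (hrank : HasProfiniteRank H r)
    (hproj : IsProjectiveProfinite P)
    (hcover : ∃ φ₀ : P →* H, Continuous φ₀ ∧ IsFrattiniCover φ₀)
    (π : P →* H) (hcont : Continuous π) (hsurj : Function.Surjective π) :
    IsFrattiniCover π := by
  obtain ⟨φ₀, hφcont, hφsurj, hφfr⟩ := hcover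
  obtain ⟨⟨S, hScard, hSdense⟩, -⟩ := hrank
  have hSfin : S.Finite := by
    rw [← Set.finite_coe_iff, ← Cardinal.mk_lt_aleph0_iff, hScard]
    exact Cardinal.nat_lt_aleph0 r
  have : Finite S := hSfin.to_subtype
  -- lift the generators of H to P
  have hex : ∀ s : S, ∃ p : P, φ₀ p = (s : H) := fun s => hφsurj s
  choose f hf using hex
  set T : Set P := Set.range f with hTdef
  have hTfin : T.Finite := Set.finite_range f
  -- T topologically generates P, by the Frattini property of φ₀
  set K : Subgroup P := (Subgroup.closure T).topologicalClosure with hKdef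
  have hKclosed : IsClosed (K : Set P) := Subgroup.isClosed_topologicalClosure _
  have hKmap : Subgroup.map φ₀ K = ⊤ := by
    have himcl : IsClosed ((Subgroup.map φ₀ K : Subgroup H) : Set H) := by
      rw [Subgroup.coe_map]
      exact ((hKclosed.isCompact).image hφcont).isClosed
    have hTK : T ⊆ (K : Set P) :=
      fun t ht => (Subgroup.le_topologicalClosure _) (Subgroup.subset_closure ht)
    have hle : Subgroup.closure S ≤ Subgroup.map φ₀ K := by
      rw [Subgroup.closure_le]
      intro s hs
      exact ⟨f ⟨s, hs⟩, hTK ⟨⟨s, hs⟩, rfl⟩, hf ⟨s, hs⟩⟩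
    have huniv : ((Subgroup.map φ₀ K : Subgroup H) : Set H) = Set.univ := by
      apply Set.eq_univ_of_univ_subset
      rw [← hSdense.closure_eq]
      exact closure_minimal hle himcl
    rw [← Subgroup.coe_top (G := H)] at huniv
    exact SetLike.coe_injective huniv
  have hKtop : K = ⊤ := hφfr K hKclosed hKmap
  have hTdense : Dense ((Subgroup.closure T : Subgroup P) : Set P) := by
    rw [dense_iff_closure_eq, ← Subgroup.topologicalClosure_coe, ← hKdef, hKtop,
      Subgroup.coe_top]
  -- lift π along φ₀ using projectivity
  obtain ⟨ψ, hψc, hψcomp⟩ := hproj P H φ₀ hφcont hφsurj π hcont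
  refine ⟨hsurj, fun K' hK'cl hK'map => ?_⟩
  set L : Subgroup P := Subgroup.map ψ K' with hLdef
  have hLcl : IsClosed (L : Set P) := by
    rw [hLdef, Subgroup.coe_map]
    exact ((hK'cl.isCompact).image hψc).isClosed
  have hφL : Subgroup.map φ₀ L = ⊤ := by
    rw [hLdef, Subgroup.map_map, hψcomp, hK'map]
  have hLtop : L = ⊤ := hφfr L hLcl hφL
  have hψsurj : Function.Surjective ψ := by
    intro p
    have : p ∈ L := hLtop ▸ Subgroup.mem_top p
    obtain ⟨k, _, hk⟩ := this
    exact ⟨k, hk⟩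
  have hψinj : Function.Injective ψ := hopfian T hTfin hTdense ψ hψc hψsurj
  rw [Subgroup.eq_top_iff']
  intro p
  have : ψ p ∈ L := hLtop ▸ Subgroup.mem_top (ψ p)
  obtain ⟨k, hkK, hk⟩ := this
  exact (hψinj hk) ▸ hkK
end

section
/- Let p be a prime and let r be a natural number. If G and H are pro-p profinite groups, both of rank r, then every continuous surjective group homomorphism π : G → H is a Frattini cover. -/
namespace FrattiniAux

variable (p : ℕ) [Fact p.Prime]

/-- The cyclic group of order `p`, written multiplicatively. -/
abbrev A : Type := Multiplicative (ZMod p)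

lemma card_A : Nat.card (A p) = p := by
  rw [Nat.card_congr (Multiplicative.toAdd (α := ZMod p))]
  exact Nat.card_zmod p

/-- Evaluation at a point, as a homomorphism on the hom group. -/
def evalHom {G : Type*} [Group G] (x : G) : (G →* A p) →* A p where
  toFun f := f x
  map_one' := rfl
  map_mul' _ _ := rfl

variable (G : Type*) [Group G] [TopologicalSpace G] [IsTopologicalGroup G]

/-- The group of homomorphisms `G →* Z/p` with open kernel. -/
def X : Subgroup (G →* A p) where
  carrier := {f | IsOpen ((f.ker : Subgroup G) : Set G)}
  one_mem' := by
    have h : (((1 : G →* A p).ker : Subgroup G) : Set G) = Set.univ := by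
      ext x; simp [MonoidHom.mem_ker]
    simp only [Set.mem_setOf_eq, h]
    exact isOpen_univ
  mul_mem' := by
    intro f g hf hg
    refine Subgroup.isOpen_mono (H₁ := f.ker ⊓ g.ker) ?_ ?_
    · intro x hx
      rcases Subgroup.mem_inf.mp hx with ⟨h1, h2⟩
      rw [MonoidHom.mem_ker] at h1 h2 ⊢
      rw [MonoidHom.mul_apply, h1, h2, mul_one]
    · rw [Subgroup.coe_inf]; exact hf.inter hg
  inv_mem' := by
    intro f hf
    have h : (f⁻¹).ker = f.ker := by
      ext x; simp [MonoidHom.mem_ker]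
    simpa only [Set.mem_setOf_eq, h] using hf

/-- Homomorphisms with open kernel vanishing on a finite set `S`. -/
def Y (S : Finset G) : Subgroup (G →* A p) :=
  X p G ⊓ ⨅ x ∈ S, (evalHom p x).ker

lemma mem_Y {S : Finset G} {f : G →* A p} :
    f ∈ Y p G S ↔ f ∈ X p G ∧ ∀ x ∈ S, f x = 1 := by
  simp [Y, Subgroup.mem_inf, Subgroup.mem_iInf, MonoidHom.mem_ker, evalHom]

variable {G}

/-- In a finite `p`-group, any proper subgroup is killed by a nontrivial character. -/
lemma pgroup_exists_hom {P : Type*} [Group P] [Finite P] (hP : IsPGroup p P)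
    {Q : Subgroup P} (hQ : Q ≠ ⊤) :
    ∃ φ : P →* A p, Q ≤ φ.ker ∧ φ ≠ 1 := by
  haveI : Finite (Subgroup P) :=
    Finite.of_injective (fun (K : Subgroup P) => (K : Set P)) SetLike.coe_injective
  obtain ⟨M, hM, hQM⟩ := (eq_top_or_exists_le_coatom Q).resolve_left hQ
  haveI : Group.IsNilpotent P := hP.isNilpotent
  haveI hMn : M.Normal :=
    Subgroup.NormalizerCondition.normal_of_coatom M (normalizerCondition_of_isNilpotent : NormalizerCondition P) hM
  -- every subgroup of the quotient is ⊥ or ⊤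
  have hinj : Function.Injective
      (Subgroup.comap (QuotientGroup.mk' M) : Subgroup (P ⧸ M) → Subgroup P) :=
    Subgroup.comap_injective (QuotientGroup.mk'_surjective M)
  have hsub : ∀ T : Subgroup (P ⧸ M), T = ⊥ ∨ T = ⊤ := by
    intro T
    have hMle : M ≤ T.comap (QuotientGroup.mk' M) := by
      intro x hx
      have h1 : QuotientGroup.mk' M x = 1 := (QuotientGroup.eq_one_iff x).2 hx
      simp only [Subgroup.mem_comap, h1]
      exact T.one_mem
    rcases hMle.lt_or_eq with hlt | heq
    · right
      apply hinj
      rw [hM.2 _ hlt, Subgroup.comap_top]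
    · left
      apply hinj
      rw [MonoidHom.comap_bot, QuotientGroup.ker_mk']
      exact heq.symm
  -- the quotient is nontrivial
  obtain ⟨x, hx⟩ : ∃ x : P, x ∉ M := by
    by_contra h
    push_neg at h
    exact hM.1 ((Subgroup.eq_top_iff' _).2 h)
  haveI : Nontrivial (P ⧸ M) :=
    ⟨⟨QuotientGroup.mk x, 1, fun h => hx ((QuotientGroup.eq_one_iff x).1 h)⟩⟩
  have hQp : IsPGroup p (P ⧸ M) := hP.to_quotient M
  have hdvd : p ∣ Nat.card (P ⧸ M) := by
    refine hQp.card_eq_or_dvd.resolve_left ?_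
    have := Finite.one_lt_card_iff_nontrivial.2 (inferInstance : Nontrivial (P ⧸ M))
    omega
  obtain ⟨g, hg⟩ := exists_prime_orderOf_dvd_card' p hdvd
  have hgne : g ≠ 1 := by
    intro h
    rw [h, orderOf_one] at hg
    exact (Fact.out : p.Prime).ne_one hg.symm
  have hzp : Subgroup.zpowers g = ⊤ :=
    (hsub _).resolve_left (by simpa [Subgroup.zpowers_eq_bot] using hgne)
  have hcard : Nat.card (P ⧸ M) = p := by
    calc Nat.card (P ⧸ M) = Nat.card (⊤ : Subgroup (P ⧸ M)) := Subgroup.card_top.symm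
    _ = Nat.card (Subgroup.zpowers g) := by rw [hzp]
    _ = orderOf g := Nat.card_zpowers g
    _ = p := hg
  let e : (P ⧸ M) ≃* A p := mulEquivOfPrimeCardEq hcard (card_A p)
  refine ⟨e.toMonoidHom.comp (QuotientGroup.mk' M), ?_, ?_⟩
  · intro q hq
    rw [MonoidHom.mem_ker, MonoidHom.comp_apply]
    have h1 : QuotientGroup.mk' M q = 1 := (QuotientGroup.eq_one_iff q).2 (hQM hq)
    rw [h1, map_one]
  · intro h
    have hx1 : e.toMonoidHom.comp (QuotientGroup.mk' M) x = 1 := by rw [h]; rfl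
    rw [MonoidHom.comp_apply] at hx1
    have : QuotientGroup.mk' M x = 1 := by
      apply e.injective
      rw [map_one]
      exact hx1
    exact hx ((QuotientGroup.eq_one_iff x).1 this)

variable [CompactSpace G] [T2Space G] [TotallyDisconnectedSpace G]

/-- Any proper closed subgroup of a pro-`p` profinite group is killed by a nontrivial
continuous character. -/
lemma exists_hom_of_ne_top (hGp : IsProPGroup p G) {K : Subgroup G}
    (hK : IsClosed (K : Set G)) (hKne : K ≠ ⊤) :
    ∃ f : G →* A p, f ∈ X p G ∧ K ≤ f.ker ∧ f ≠ 1 := by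
  obtain ⟨g, hg⟩ : ∃ g : G, g ∉ K := by
    by_contra h
    push_neg at h
    exact hKne ((Subgroup.eq_top_iff' _).2 h)
  have hW : IsOpen ((fun x => g * x) ⁻¹' (↑K)ᶜ) :=
    hK.isOpen_compl.preimage (continuous_const.mul continuous_id)
  have h1W : (1 : G) ∈ (fun x => g * x) ⁻¹' (↑K)ᶜ := by
    simpa using hg
  obtain ⟨V, hV, h1V, hVW⟩ := compact_exists_isClopen_in_isOpen hW h1W
  obtain ⟨N, hN⟩ :=
    IsTopologicalGroup.exist_openNormalSubgroup_sub_clopen_nhds_of_one hV h1V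
  obtain ⟨hfin, hpg⟩ := hGp N.toSubgroup N.isOpen
  haveI := hfin
  set Q : Subgroup (G ⧸ N.toSubgroup) := K.map (QuotientGroup.mk' N.toSubgroup) with hQdef
  have hQ : Q ≠ ⊤ := by
    intro htop
    have hmem : QuotientGroup.mk' N.toSubgroup g ∈ Q := htop ▸ Subgroup.mem_top _
    obtain ⟨k, hkK, hkg⟩ := hmem
    obtain ⟨z, hzN, hzk⟩ := ((QuotientGroup.mk'_eq_mk' (N := N.toSubgroup)).1 hkg)
    -- k * z = g, so g * z⁻¹ = k ∈ K, but z⁻¹ ∈ N ⊆ V ⊆ W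
    have hz' : z⁻¹ ∈ N.toSubgroup := N.toSubgroup.inv_mem hzN
    have : g * z⁻¹ ∉ K := hVW (hN hz')
    apply this
    rw [← hzk]
    simpa [mul_assoc] using hkK
  obtain ⟨φ, hker, hφ⟩ := pgroup_exists_hom p hpg hQ
  refine ⟨φ.comp (QuotientGroup.mk' N.toSubgroup), ?_, ?_, ?_⟩
  · -- open kernel
    show IsOpen (((φ.comp (QuotientGroup.mk' N.toSubgroup)).ker : Subgroup G) : Set G)
    refine Subgroup.isOpen_mono (H₁ := N.toSubgroup) ?_ N.isOpen
    intro n hn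
    rw [MonoidHom.mem_ker, MonoidHom.comp_apply]
    have h1 : QuotientGroup.mk' N.toSubgroup n = 1 := (QuotientGroup.eq_one_iff n).2 hn
    rw [h1, map_one]
  · intro k hk
    rw [MonoidHom.mem_ker, MonoidHom.comp_apply]
    exact hker ⟨k, hk, rfl⟩
  · intro h
    have hall : ∀ q : G ⧸ N.toSubgroup, φ q = 1 := by
      intro q
      obtain ⟨y, rfl⟩ := QuotientGroup.mk'_surjective N.toSubgroup q
      have := DFunLike.congr_fun h y
      simpa using this
    exact hφ (MonoidHom.ext hall)

/-- Upper bound: the character group injects into functions on a dense generating set. -/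
lemma X_finite_card_le {r : ℕ} {S : Set G} (hScard : Cardinal.mk S = (r : Cardinal))
    (hSdense : Dense ((Subgroup.closure S : Subgroup G) : Set G)) :
    Finite (X p G) ∧ Nat.card (X p G) ≤ p ^ r := by
  haveI : NeZero p := ⟨(Fact.out : p.Prime).ne_zero⟩
  haveI hSfin : Finite S := by
    rw [← Cardinal.lt_aleph0_iff_finite, hScard]
    exact Cardinal.nat_lt_aleph0 r
  set Φ : X p G → (S → A p) := fun f s => (f : G →* A p) s with hΦ
  have hinj : Function.Injective Φ := by
    intro f g hfg
    have key : ∀ x : G, (f : G →* A p) x = (g : G →* A p) x := by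
      set u : G →* A p := (f : G →* A p) * (g : G →* A p)⁻¹ with hu
      have humem : u ∈ X p G := (X p G).mul_mem f.2 ((X p G).inv_mem g.2)
      have hSker : S ⊆ (u.ker : Set G) := by
        intro s hs
        have : (f : G →* A p) s = (g : G →* A p) s := congrFun hfg ⟨s, hs⟩
        show u s ∈ ({1} : Set (A p))
        simp only [hu, MonoidHom.mul_apply, MonoidHom.inv_apply, Set.mem_singleton_iff]
        rw [this]
        exact mul_inv_cancel _
      have hker_closed : IsClosed ((u.ker : Subgroup G) : Set G) :=
        Subgroup.isClosed_of_isOpen _ humem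
      have hle : Subgroup.closure S ≤ u.ker := (Subgroup.closure_le _).2 hSker
      have : ((u.ker : Subgroup G) : Set G) = Set.univ := by
        apply Set.eq_univ_of_univ_subset
        rw [← hSdense.closure_eq]
        exact hker_closed.closure_subset_iff.2 hle
      intro x
      have hx : x ∈ u.ker := by rw [← SetLike.mem_coe, this]; trivial
      rw [MonoidHom.mem_ker, hu, MonoidHom.mul_apply, MonoidHom.inv_apply,
        mul_inv_eq_one] at hx
      exact hx
    exact Subtype.ext (MonoidHom.ext key)
  haveI : Finite (S → A p) := inferInstance
  haveI hXfin : Finite (X p G) := Finite.of_injective Φ hinj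
  refine ⟨hXfin, ?_⟩
  have hle := Nat.card_le_card_of_injective Φ hinj
  have hcardS : Nat.card S = r := by
    have : (Cardinal.mk S).toNat = r := by rw [hScard]; simp
    simpa [Nat.card] using this
  rwa [Nat.card_fun, card_A, hcardS] at hle

/-- Key step: if some `f ∈ Y S` has `f h ≠ 1`, adding `h` divides the count by `p` exactly. -/
lemma Y_insert_card [DecidableEq G] (S : Finset G) (h : G) {f : G →* A p}
    (hfY : f ∈ Y p G S) (hfh : f h ≠ 1) [Finite (X p G)] :
    Nat.card (Y p G S) = p * Nat.card (Y p G (insert h S)) := by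
  haveI : ∀ T : Finset G, Finite (Y p G T) := fun T =>
    Finite.of_injective (Subgroup.inclusion (inf_le_left : Y p G T ≤ X p G))
      (Subgroup.inclusion_injective _)
  set e : Y p G S →* A p := (evalHom p h).domRestrict (Y p G S) with he
  have hker : e.ker = ((Y p G (insert h S)).subgroupOf (Y p G S)) := by
    ext ⟨u, hu⟩
    rw [MonoidHom.mem_ker, Subgroup.mem_subgroupOf]
    have hu' := (mem_Y p G).1 hu
    simp only [he, MonoidHom.domRestrict_apply, mem_Y, evalHom, MonoidHom.coe_mk, OneHom.coe_mk]
    constructor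
    · intro h1
      refine ⟨hu'.1, ?_⟩
      intro x hx
      rcases Finset.mem_insert.1 hx with rfl | hx
      · exact h1
      · exact hu'.2 x hx
    · intro h1
      exact h1.2 h (Finset.mem_insert_self h S)
  have hrange : e.range = ⊤ := by
    have hne : e.range ≠ ⊥ := by
      intro hbot
      have : e ⟨f, hfY⟩ = 1 := by
        have : e ⟨f, hfY⟩ ∈ e.range := ⟨_, rfl⟩
        rwa [hbot, Subgroup.mem_bot] at this
      exact hfh this
    haveI : Fact (Nat.card (A p)).Prime := ⟨(card_A p).symm ▸ (Fact.out : p.Prime)⟩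
    exact (Subgroup.eq_bot_or_eq_top_of_prime_card e.range).resolve_left hne
  have hcard1 : Nat.card (Y p G S) = Nat.card (Y p G S ⧸ e.ker) * Nat.card e.ker :=
    Subgroup.card_eq_card_quotient_mul_card_subgroup e.ker
  have hq : Nat.card (Y p G S ⧸ e.ker) = p := by
    rw [Nat.card_congr (QuotientGroup.quotientKerEquivRange e).toEquiv, hrange,
      Subgroup.card_top, card_A]
  have hk : Nat.card e.ker = Nat.card (Y p G (insert h S)) := by
    rw [hker]
    exact Nat.card_congr (Subgroup.subgroupOfEquivOfLe
      (show Y p G (insert h S) ≤ Y p G S from by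
        apply le_inf inf_le_left
        refine le_iInf fun x => le_iInf fun hx => ?_
        exact le_trans inf_le_right (iInf_le_of_le x (iInf_le _ (Finset.mem_insert_of_mem hx))))).toEquiv
  rw [hcard1, hq, hk]

/-- Induction: the size of the character group is `p ^ k` where `k` bounds the number of
topological generators. -/
lemma gen_from_card (hGp : IsProPGroup p G) [Finite (X p G)] :
    ∀ n : ℕ, ∀ S : Finset G, Nat.card (Y p G S) = n →
      ∃ (k : ℕ) (T : Finset G), T.card ≤ S.card + k ∧ n = p ^ k ∧
        Dense ((Subgroup.closure (T : Set G) : Subgroup G) : Set G) := by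
  haveI : ∀ T : Finset G, Finite (Y p G T) := fun T =>
    Finite.of_injective (Subgroup.inclusion (inf_le_left : Y p G T ≤ X p G))
      (Subgroup.inclusion_injective _)
  haveI := Classical.decEq G
  intro n
  induction n using Nat.strong_induction_on with
  | _ n ih =>
    intro S hS
    by_cases hd : Dense ((Subgroup.closure (S : Set G) : Subgroup G) : Set G)
    · refine ⟨0, S, by simp, ?_, hd⟩
      have hbot : Y p G S = ⊥ := by
        rw [Subgroup.eq_bot_iff_forall]
        intro f hf
        obtain ⟨hfX, hfS⟩ := (mem_Y p G).1 hf
        have hSker : (S : Set G) ⊆ (f.ker : Set G) := fun s hs => hfS s hs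
        have hker_closed : IsClosed ((f.ker : Subgroup G) : Set G) :=
          Subgroup.isClosed_of_isOpen _ hfX
        have hle : Subgroup.closure (S : Set G) ≤ f.ker := (Subgroup.closure_le _).2 hSker
        have huniv : ((f.ker : Subgroup G) : Set G) = Set.univ := by
          apply Set.eq_univ_of_univ_subset
          rw [← hd.closure_eq]
          exact hker_closed.closure_subset_iff.2 hle
        ext x
        have hx : x ∈ f.ker := by rw [← SetLike.mem_coe, huniv]; trivial
        simpa using hx
      rw [← hS, hbot]
      simp [Nat.card_eq_fintype_card]
    · set L : Subgroup G := (Subgroup.closure (S : Set G)).topologicalClosure with hL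
      have hLclosed : IsClosed (L : Set G) := Subgroup.isClosed_topologicalClosure _
      have hLne : L ≠ ⊤ := by
        intro htop
        apply hd
        have : (L : Set G) = Set.univ := by rw [htop]; rfl
        rw [hL, Subgroup.topologicalClosure_coe] at this
        rw [dense_iff_closure_eq]
        exact this
      obtain ⟨f, hfX, hfker, hfne⟩ := exists_hom_of_ne_top p hGp hLclosed hLne
      have hfY : f ∈ Y p G S := by
        rw [mem_Y]
        refine ⟨hfX, fun x hx => ?_⟩
        have hxL : x ∈ L := (Subgroup.le_topologicalClosure _) (Subgroup.subset_closure hx)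
        exact hfker hxL
      obtain ⟨h, hfh⟩ : ∃ h : G, f h ≠ 1 := by
        by_contra hc
        push_neg at hc
        exact hfne (MonoidHom.ext hc)
      have hstep := Y_insert_card p S h hfY hfh
      set m := Nat.card (Y p G (insert h S)) with hm
      have hppos : 2 ≤ p := (Fact.out : p.Prime).two_le
      haveI : Nonempty (Y p G (insert h S)) := ⟨1⟩
      have hmpos : 0 < m := Nat.card_pos
      have hmlt : m < n := by
        rw [← hS, hstep]
        calc m = 1 * m := (one_mul m).symm
        _ < p * m := (Nat.mul_lt_mul_right hmpos).2 (by omega)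
      obtain ⟨k, T, hTcard, hmk, hTdense⟩ := ih m hmlt (insert h S) rfl
      refine ⟨k + 1, T, ?_, ?_, hTdense⟩
      · calc T.card ≤ (insert h S).card + k := hTcard
        _ ≤ S.card + 1 + k := by
          have := Finset.card_insert_le h S
          omega
        _ = S.card + (k + 1) := by omega
      · rw [← hS, hstep, hmk, pow_succ]
        ring

end FrattiniAux

open FrattiniAux in
/-- Every continuous surjective homomorphism between pro-`p` (profinite) groups of the same
finite rank is a Frattini cover. -/
theorem epi_of_proP_same_finite_rank_is_frattini
    (p : ℕ) (hp : p.Prime) (r : ℕ)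
    (G H : Type*)
    [Group G] [TopologicalSpace G] [IsTopologicalGroup G]
    [CompactSpace G] [T2Space G] [TotallyDisconnectedSpace G]
    [Group H] [TopologicalSpace H] [IsTopologicalGroup H]
    [CompactSpace H] [T2Space H] [TotallyDisconnectedSpace H]
    (hGp : IsProPGroup p G) (hHp : IsProPGroup p H)
    (hGrank : HasProfiniteRank G r) (hHrank : HasProfiniteRank H r)
    (π : G →* H) (hcont : Continuous π) (hsurj : Function.Surjective π) :
    IsFrattiniCover π := by
  haveI : Fact p.Prime := ⟨hp⟩
  refine ⟨hsurj, ?_⟩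
  intro K hKclosed hKmap
  by_contra hKne
  -- character group bounds
  obtain ⟨SG, hSGcard, hSGdense⟩ := hGrank.1
  obtain ⟨hXGfin, hXGle⟩ := X_finite_card_le p hSGcard hSGdense
  obtain ⟨SH, hSHcard, hSHdense⟩ := hHrank.1
  obtain ⟨hXHfin, hXHle⟩ := X_finite_card_le p hSHcard hSHdense
  haveI := hXGfin
  haveI := hXHfin
  -- lower bound for H: Nat.card (X p H) = p ^ k with k ≥ r
  have hY0 : Y p H (∅ : Finset H) = X p H := by
    apply le_antisymm inf_le_left
    apply le_inf le_rfl
    refine le_iInf fun x => le_iInf fun hx => ?_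
    exact absurd hx (Finset.notMem_empty x)
  obtain ⟨k, T, hTcard, hcardXH, hTdense⟩ :=
    gen_from_card p hHp (Nat.card (Y p H (∅ : Finset H))) ∅ rfl
  rw [hY0] at hcardXH
  have hrT : r ≤ T.card := by
    have hr := hHrank.2 (T : Set H) hTdense
    have hmk : Cardinal.mk ((T : Set H) : Type _) = (T.card : Cardinal) :=
      Cardinal.mk_coe_finset
    rw [hmk] at hr
    exact_mod_cast hr
  have hrk : r ≤ k := by
    have h0 : T.card ≤ 0 + k := by simpa using hTcard
    omega
  have hlowH : p ^ r ≤ Nat.card (X p H) := by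
    rw [hcardXH]
    exact Nat.pow_le_pow_right hp.pos hrk
  -- the injection X p H → X p G
  set j : X p H → X p G := fun f =>
    ⟨(f : H →* A p).comp π, by
      show IsOpen ((((f : H →* A p).comp π).ker : Subgroup G) : Set G)
      have hset : ((((f : H →* A p).comp π).ker : Subgroup G) : Set G) =
          π ⁻¹' (((f : H →* A p).ker : Subgroup H) : Set H) := by
        ext x
        simp [MonoidHom.mem_ker]
      rw [hset]
      exact (f.2 : IsOpen _).preimage hcont⟩ with hj
  have hjinj : Function.Injective j := by
    intro a b hab
    apply Subtype.ext
    apply MonoidHom.ext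
    intro y
    obtain ⟨x, rfl⟩ := hsurj y
    have := congrArg Subtype.val hab
    exact DFunLike.congr_fun this x
  have hcards : Nat.card (X p H) = Nat.card (X p G) := by
    have h1 : Nat.card (X p H) ≤ Nat.card (X p G) := Nat.card_le_card_of_injective j hjinj
    omega
  have hjbij : Function.Bijective j :=
    (Nat.bijective_iff_injective_and_card j).2 ⟨hjinj, hcards⟩
  -- the character killing K is not in the range of j
  obtain ⟨f₀, hf₀X, hf₀K, hf₀ne⟩ := exists_hom_of_ne_top p hGp hKclosed hKne
  obtain ⟨g, hg⟩ := hjbij.2 ⟨f₀, hf₀X⟩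
  apply hf₀ne
  apply MonoidHom.ext
  intro x
  have hπx : π x ∈ Subgroup.map π K := hKmap ▸ Subgroup.mem_top _
  obtain ⟨kx, hkxK, hkx⟩ := hπx
  have hval : f₀ x = (g : H →* A p) (π x) := by
    have := congrArg Subtype.val hg
    exact (DFunLike.congr_fun this x).symm
  rw [hval, ← hkx]
  show (g : H →* A p) (π kx) = 1
  have : f₀ kx = 1 := hf₀K hkxK
  have hvk : f₀ kx = (g : H →* A p) (π kx) := by
    have := congrArg Subtype.val hg
    exact (DFunLike.congr_fun this kx).symm
  rw [← hvk]
  exact this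
end

section
/- Let G be a group acting on a field K by field automorphisms and let C := K^G be the fixed field. Let C' be an intermediate field with C ⊆ C' ⊆ K such that C'/C is a finite Galois extension. Then C' is stable under the action of G (g·C' = C' for every g ∈ G), and the restriction map from G to Gal(C'/C) is surjective: for every σ ∈ Gal(C'/C) there exists g ∈ G such that g·x = σ(x) for all x ∈ C'. -/
set_option synthInstance.maxHeartbeats 400000
set_option maxHeartbeats 1000000
/-- Let a group `G` act on a field `K` by field automorphisms with fixed field `C = K^G`, and
let `C'` with `C ⊆ C' ⊆ K` be a finite Galois extension of `C`. Then `C'` is stable under the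
action of `G`, and every element of `Gal(C'/C)` is induced by some element of `G`. -/
theorem restriction_to_finite_galois_subextension_surjective
    (G : Type*) [Group G] (K : Type*) [Field K] [MulSemiringAction G K]
    (C' : IntermediateField (FixedPoints.subfield G K) K)
    [FiniteDimensional (FixedPoints.subfield G K) C']
    [IsGalois (FixedPoints.subfield G K) C'] :
    (∀ g : G, (fun x : K => g • x) '' (C' : Set K) = (C' : Set K)) ∧
    (∀ σ : C' ≃ₐ[FixedPoints.subfield G K] C',
      ∃ g : G, ∀ x : C', g • (x : K) = ((σ x : C') : K)) := by
  let ψ : G →* (C' ≃ₐ[FixedPoints.subfield G K] C') :=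
    (AlgEquiv.restrictNormalHom (F := FixedPoints.subfield G K) (K₁ := K) C').comp (MulSemiringAction.toAlgAut G (FixedPoints.subfield G K) K)
  have key : ∀ (g : G) (x : C'), ((ψ g x : C') : K) = g • (x : K) := fun g x =>
    AlgEquiv.restrictNormalHom_apply C' (MulSemiringAction.toAlgAut G (FixedPoints.subfield G K) K g) x
  have mem : ∀ (g : G) (x : K), x ∈ C' → g • x ∈ C' := by
    intro g x hx
    have h := key g ⟨x, hx⟩
    rw [← h]
    exact (ψ g ⟨x, hx⟩).2
  constructor
  · intro g
    ext y
    constructor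
    · rintro ⟨x, hx, rfl⟩
      exact mem g x hx
    · intro hy
      exact ⟨g⁻¹ • y, mem g⁻¹ y hy, smul_inv_smul g y⟩
  · intro σ
    have hrange : ψ.range = ⊤ := by
      have h1 : IntermediateField.fixedField ψ.range = ⊥ := by
        apply le_antisymm
        · intro x hx
          rw [IntermediateField.mem_bot]
          have hxC : (x : K) ∈ FixedPoints.subfield G K := by
            intro g
            have h2 : ψ g x = x := hx ⟨ψ g, ⟨g, rfl⟩⟩
            calc g • (x : K) = ((ψ g x : C') : K) := (key g x).symm
              _ = (x : K) := by rw [h2]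
          exact ⟨⟨(x : K), hxC⟩, Subtype.ext rfl⟩
        · exact bot_le
      refine eq_top_iff.2 ?_
      rw [← IntermediateField.fixingSubgroup_fixedField ψ.range, h1]
      intro τ _
      rw [IntermediateField.mem_fixingSubgroup_iff]
      intro y hy
      obtain ⟨c, rfl⟩ := IntermediateField.mem_bot.1 hy
      exact τ.commutes c
    obtain ⟨g, hg⟩ := hrange ▸ Subgroup.mem_top σ
    exact ⟨g, fun x => by rw [← hg, key g x]⟩
end

section
/- Let K₂ ⊆ K₁ ⊆ K be a tower of fields such that K/K₁ and K/K₂ are finite Galois extensions. Fix a separable closure K^sep of K, and for i ∈ {1,2} write Gal(K_i) := Gal(K^sep/K_i), a profinite group with the Krull topology. Let 𝒢₁ ≤ Gal(K₁) and 𝒢₂ ≤ Gal(K₂) be closed subgroups such that: (1) for each i ∈ {1,2}, every element of Gal(K/K_i) is the restriction to K of some element of 𝒢_i; and (2) 𝒢₁ ∩ Gal(K^sep/K) = 𝒢₂ ∩ Gal(K^sep/K). Then the composita coincide: (K^sep)^{𝒢₁}·K = (K^sep)^{𝒢₂}·K, and both are equal to the fixed field of 𝒢₁ ∩ Gal(K^sep/K)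 in K^sep. -/
set_option synthInstance.maxHeartbeats 400000
set_option maxHeartbeats 1000000

open IntermediateField

theorem aux_fixedField_sup {K2 Ω : Type*} [Field K2] [Field Ω] [Algebra K2 Ω]
    [IsSepClosed Ω] [Algebra.IsSeparable K2 Ω]
    (F : IntermediateField K2 Ω) [FiniteDimensional K2 F]
    (𝒢 : Subgroup (Ω ≃ₐ[K2] Ω)) :
    fixedField 𝒢 ⊔ F = fixedField (𝒢 ⊓ F.fixingSubgroup) := by
  apply le_antisymm
  · apply sup_le
    · intro y hy g
      exact hy ⟨g.1, g.2.1⟩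
    · intro y hy g
      exact g.2.2 ⟨y, hy⟩
  · intro x hx
    haveI : Algebra.IsAlgebraic K2 Ω := Algebra.IsSeparable.isAlgebraic K2 Ω
    haveI : IsSepClosure K2 Ω := ⟨‹_›, ‹_›⟩
    haveI : Normal K2 Ω := IsGalois.to_normal
    have hxint : IsIntegral K2 x := Algebra.IsIntegral.isIntegral x
    haveI : FiniteDimensional K2 K2⟮x⟯ := IntermediateField.adjoin.finiteDimensional hxint
    haveI : FiniteDimensional K2 (F ⊔ K2⟮x⟯ : IntermediateField K2 Ω) :=
      IntermediateField.finiteDimensional_sup F K2⟮x⟯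
    set M : IntermediateField K2 Ω := normalClosure K2 (F ⊔ K2⟮x⟯ : IntermediateField K2 Ω) Ω with hM
    haveI : FiniteDimensional K2 M := normalClosure.is_finiteDimensional K2 _ Ω
    haveI : Normal K2 M := normalClosure.normal K2 _ Ω
    haveI : Algebra.IsSeparable K2 M := Algebra.isSeparable_tower_bot_of_isSeparable K2 M Ω
    haveI : IsGalois K2 M := ⟨⟩
    have hM'M : (F ⊔ K2⟮x⟯ : IntermediateField K2 Ω) ≤ M := IntermediateField.le_normalClosure _
    have hFM : F ≤ M := le_trans le_sup_left hM'M
    have hxM : x ∈ M := hM'M ((le_sup_right : K2⟮x⟯ ≤ F ⊔ K2⟮x⟯) (IntermediateField.mem_adjoin_simple_self K2 x))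
    set π : (Ω ≃ₐ[K2] Ω) →* (M ≃ₐ[K2] M) := AlgEquiv.restrictNormalHom M with hπ
    set F' : IntermediateField K2 M := (IntermediateField.inclusion hFM).fieldRange with hF'
    have hcomm : ∀ (g : Ω ≃ₐ[K2] Ω) (z : M), g (z : Ω) = ((π g) z : Ω) := by
      intro g z
      exact (AlgEquiv.restrictNormal_commutes g M z).symm
    set H1 : Subgroup (M ≃ₐ[K2] M) := Subgroup.map π 𝒢 with hH1
    -- the finite Galois correspondence step
    have hfix : fixingSubgroup (fixedField H1 ⊔ F') = H1 ⊓ F'.fixingSubgroup := by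
      apply le_antisymm
      · exact le_inf
          ((IntermediateField.fixingSubgroup_antitone le_sup_left).trans_eq
            (IntermediateField.fixingSubgroup_fixedField H1))
          (IntermediateField.fixingSubgroup_antitone le_sup_right)
      · rw [← IntermediateField.le_iff_le]
        apply sup_le
        · intro y hy g
          exact hy ⟨g.1, g.2.1⟩
        · intro y hy g
          exact g.2.2 ⟨y, hy⟩
    have hx' : (⟨x, hxM⟩ : M) ∈ fixedField H1 ⊔ F' := by
      rw [← IsGalois.fixedField_fixingSubgroup (fixedField H1 ⊔ F'), hfix]
      have main : ∀ t ∈ H1 ⊓ F'.fixingSubgroup, ∀ hm : x ∈ M, t • (⟨x, hm⟩ : M) = ⟨x, hm⟩ := by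
        rintro t ⟨ht1, ht2⟩ hm
        obtain ⟨g, hg𝒢, rfl⟩ := ht1
        have hgF : g ∈ F.fixingSubgroup := by
          intro z
          obtain ⟨z, hz⟩ := z
          have hzM : z ∈ M := hFM hz
          have h2 : π g • (⟨z, hzM⟩ : M) = ⟨z, hzM⟩ := ht2 ⟨⟨z, hzM⟩, ⟨⟨z, hz⟩, rfl⟩⟩
          show g z = z
          calc g z = ((π g) ⟨z, hzM⟩ : Ω) := hcomm g ⟨z, hzM⟩
          _ = z := by rw [show (π g) (⟨z, hzM⟩ : M) = ⟨z, hzM⟩ from h2]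
        have hgx : g x = x := hx ⟨g, hg𝒢, hgF⟩
        ext
        show ((π g) ⟨x, hm⟩ : Ω) = x
        rw [← hcomm g ⟨x, hm⟩]
        exact hgx
      intro τ
      exact main τ.1 τ.2 hxM
    -- push forward to Ω
    have hmap : IntermediateField.map M.val (fixedField H1 ⊔ F') ≤ fixedField 𝒢 ⊔ F := by
      rw [IntermediateField.map_sup]
      apply sup_le
      · apply le_trans _ (le_sup_left : fixedField 𝒢 ≤ _)
        rintro y ⟨z, hz, rfl⟩
        intro g
        show g.1 (M.val z) = M.val z
        have : π g.1 z = z := hz ⟨π g.1, ⟨g.1, g.2, rfl⟩⟩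
        rw [show (M.val z : Ω) = (z : Ω) from rfl, hcomm g.1 z, this]
      · apply le_trans _ (le_sup_right : F ≤ _)
        rintro y ⟨z, ⟨w, rfl⟩, rfl⟩
        exact w.2
    exact hmap ⟨⟨x, hxM⟩, hx', rfl⟩

/-- Let `K₂ ⊆ K₁ ⊆ K` be a tower of fields with `K/K₁` and `K/K₂` finite Galois, inside a
separable closure `Ω` of `K`. Let `𝒢₁ ≤ Gal(Ω/K₁)` and `𝒢₂ ≤ Gal(Ω/K₂)` be closed subgroups
(viewed inside `Gal(Ω/K₂)`, with `𝒢₁` contained in the subgroup fixing `K₁`) such that each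
`𝒢ᵢ` restricts onto `Gal(K/Kᵢ)` and `𝒢₁ ∩ Gal(Ω/K) = 𝒢₂ ∩ Gal(Ω/K)`. Then the composita
`Ω^{𝒢₁}·K` and `Ω^{𝒢₂}·K` coincide, and both equal the fixed field of
`𝒢₁ ∩ Gal(Ω/K)`. -/
theorem composita_coincide_of_compatible_subgroups
    (K2 K1 K Ω : Type*) [Field K2] [Field K1] [Field K] [Field Ω]
    [Algebra K2 K1] [Algebra K1 K] [Algebra K2 K] [IsScalarTower K2 K1 K]
    [Algebra K Ω] [Algebra K1 Ω] [Algebra K2 Ω]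
    [IsScalarTower K1 K Ω] [IsScalarTower K2 K Ω] [IsScalarTower K2 K1 Ω]
    [FiniteDimensional K1 K] [IsGalois K1 K]
    [FiniteDimensional K2 K] [IsGalois K2 K]
    [IsSepClosure K Ω]
    (𝒢₁ 𝒢₂ : Subgroup (Ω ≃ₐ[K2] Ω))
    (h𝒢₁K1 : 𝒢₁ ≤ ((IsScalarTower.toAlgHom K2 K1 Ω).fieldRange).fixingSubgroup)
    (h𝒢₁closed : IsClosed (𝒢₁ : Set (Ω ≃ₐ[K2] Ω)))
    (h𝒢₂closed : IsClosed (𝒢₂ : Set (Ω ≃ₐ[K2] Ω)))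
    (hres1 : ∀ τ : K ≃ₐ[K1] K, ∃ g ∈ 𝒢₁, ∀ x : K,
      g (algebraMap K Ω x) = algebraMap K Ω (τ x))
    (hres2 : ∀ τ : K ≃ₐ[K2] K, ∃ g ∈ 𝒢₂, ∀ x : K,
      g (algebraMap K Ω x) = algebraMap K Ω (τ x))
    (hint : 𝒢₁ ⊓ ((IsScalarTower.toAlgHom K2 K Ω).fieldRange).fixingSubgroup
          = 𝒢₂ ⊓ ((IsScalarTower.toAlgHom K2 K Ω).fieldRange).fixingSubgroup) :
    IntermediateField.fixedField 𝒢₁ ⊔ (IsScalarTower.toAlgHom K2 K Ω).fieldRange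
      = IntermediateField.fixedField 𝒢₂ ⊔ (IsScalarTower.toAlgHom K2 K Ω).fieldRange
    ∧ IntermediateField.fixedField 𝒢₁ ⊔ (IsScalarTower.toAlgHom K2 K Ω).fieldRange
      = IntermediateField.fixedField
          (𝒢₁ ⊓ ((IsScalarTower.toAlgHom K2 K Ω).fieldRange).fixingSubgroup) := by
  haveI : IsSepClosed Ω := IsSepClosure.sep_closed K
  haveI : Algebra.IsSeparable K2 Ω := Algebra.IsSeparable.trans K2 K Ω
  set F := (IsScalarTower.toAlgHom K2 K Ω).fieldRange with hF
  haveI : FiniteDimensional K2 F :=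
    LinearEquiv.finiteDimensional
      (AlgEquiv.ofInjectiveField (IsScalarTower.toAlgHom K2 K Ω)).toLinearEquiv
  have h1 := aux_fixedField_sup F 𝒢₁
  have h2 := aux_fixedField_sup F 𝒢₂
  refine ⟨?_, h1⟩
  rw [h1, h2, hint]
end

section
/- Let K be a perfect field, let C ⊆ K be a finite Galois extension, and let the group G := Gal(K/C) act on K in the natural way. Fix an algebraic closure C̄ of C containing K. Assume that the restriction map Aut(C̄/C) → Gal(K/C) is a Frattini cover, i.e.: for every closed subgroup 𝒢 of Aut(C̄/C) (with the Krull topology) such that every element of Gal(K/C) is the restriction to K of some element of 𝒢, one has 𝒢 = Aut(C̄/C). Then the G-field K is G-closed: every algebraic G-field extension of K is trivial. -/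
open Pointwise

/-- A `G`-field `K` is `G`-closed if every algebraic `G`-field extension of `K` is trivial:
for every field `L` with an action of `G` by field automorphisms and every `G`-equivariant
field embedding `K → L` such that `L` is algebraic over the image of `K`, the embedding is
surjective. -/
def IsGClosed (G : Type*) (K : Type*) [Group G] [Field K] [MulSemiringAction G K] : Prop :=
  ∀ (L : Type*) [Field L] [MulSemiringAction G L] (f : K →+* L),
    (∀ (g : G) (x : K), f (g • x) = g • f x) →
    (∀ y : L, ∃ p : Polynomial K, p ≠ 0 ∧ Polynomial.eval₂ f y p = 0) →
    Function.Surjective f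

/-- Let `K` be a perfect field, `C ⊆ K` a finite Galois extension, and let
`G := Gal(K/C)` act naturally on `K`. If the restriction map `Aut(C̄/C) → Gal(K/C)`
(from the automorphism group of an algebraic closure `C̄` of `C` containing `K`) is a
Frattini cover, then the `G`-field `K` is `G`-closed. -/
theorem gClosed_of_restriction_frattini_cover
    (C K Ω : Type*) [Field C] [Field K] [Field Ω]
    [Algebra C K] [Algebra C Ω] [Algebra K Ω] [IsScalarTower C K Ω]
    [PerfectField K] [FiniteDimensional C K] [IsGalois C K] [IsAlgClosure C Ω]
    (hfrattini : ∀ 𝒢 : Subgroup (Ω ≃ₐ[C] Ω), IsClosed (𝒢 : Set (Ω ≃ₐ[C] Ω)) →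
      (∀ ρ : K ≃ₐ[C] K, ∃ σ ∈ 𝒢, ∀ x : K,
        σ (algebraMap K Ω x) = algebraMap K Ω (ρ x)) → 𝒢 = ⊤) :
    IsGClosed (K ≃ₐ[C] K) K := by
  intro L _ _ f hf halg
  haveI : IsAlgClosed Ω := IsAlgClosure.isAlgClosed C
  haveI : Algebra.IsAlgebraic C Ω := IsAlgClosure.isAlgebraic
  haveI : Algebra.IsAlgebraic K Ω := Algebra.IsAlgebraic.tower_top (K := C) K
  letI : Algebra K L := f.toAlgebra
  haveI : Algebra.IsAlgebraic K L := by
    constructor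
    intro l
    obtain ⟨p, hp, hev⟩ := halg l
    exact ⟨p, hp, by rw [Polynomial.aeval_def]; exact hev⟩
  -- The embedding of `L` into `Ω` over `K`.
  let jA : L →ₐ[K] Ω := IsAlgClosed.lift
  let j : L →+* Ω := jA.toRingHom
  have hjf : ∀ x : K, j (f x) = algebraMap K Ω x := fun x => jA.commutes x
  have hjinj : Function.Injective j := j.injective
  -- The subgroup 𝒢 of automorphisms preserving the image of `L` and acting as some `g` there.
  let 𝒢 : Subgroup (Ω ≃ₐ[C] Ω) :=
    { carrier := {σ | ∃ g : K ≃ₐ[C] K, ∀ l : L, σ (j l) = j (g • l)}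
      one_mem' := ⟨1, fun l => by simp⟩
      mul_mem' := by
        rintro σ τ ⟨g, hg⟩ ⟨h, hh⟩
        refine ⟨g * h, fun l => ?_⟩
        rw [AlgEquiv.mul_apply, hh, hg, mul_smul]
      inv_mem' := by
        rintro σ ⟨g, hg⟩
        refine ⟨g⁻¹, fun l => σ.injective ?_⟩
        rw [hg, smul_inv_smul]
        exact σ.apply_symm_apply (j l) }
  have h𝒢mem : ∀ σ : Ω ≃ₐ[C] Ω, σ ∈ 𝒢 ↔ ∃ g : K ≃ₐ[C] K, ∀ l : L, σ (j l) = j (g • l) :=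
    fun σ => Iff.rfl
  -- Sets of the form `{σ | σ a = b}` are closed in the Krull topology.
  have hpoint : ∀ a b : Ω, IsClosed {σ : Ω ≃ₐ[C] Ω | σ a = b} := by
    intro a b
    rw [← isOpen_compl_iff, isOpen_iff_forall_mem_open]
    intro σ hσ
    let E := IntermediateField.adjoin C ({a} : Set Ω)
    haveI : FiniteDimensional C E :=
      IntermediateField.adjoin.finiteDimensional
        (Algebra.IsAlgebraic.isAlgebraic (R := C) a).isIntegral
    refine ⟨σ • (E.fixingSubgroup : Set (Ω ≃ₐ[C] Ω)), ?_,
      (E.fixingSubgroup_isOpen).leftCoset σ, ?_⟩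
    · rintro τ ⟨h, hh, rfl⟩
      have ha : h a = a :=
        (IntermediateField.mem_fixingSubgroup_iff E h).mp hh a
          (IntermediateField.mem_adjoin_simple_self C a)
      simp only [Set.mem_compl_iff, Set.mem_setOf_eq]
      show (σ • h) a ≠ b
      rw [smul_eq_mul, AlgEquiv.mul_apply, ha]
      exact hσ
    · exact ⟨1, E.fixingSubgroup.one_mem', by simp⟩
  -- 𝒢 is closed.
  have h𝒢closed : IsClosed (𝒢 : Set (Ω ≃ₐ[C] Ω)) := by
    have hrw : (𝒢 : Set (Ω ≃ₐ[C] Ω)) =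
        ⋃ g : K ≃ₐ[C] K, ⋂ l : L, {σ : Ω ≃ₐ[C] Ω | σ (j l) = j (g • l)} := by
      ext σ
      simp only [Set.mem_iUnion, Set.mem_iInter, Set.mem_setOf_eq, SetLike.mem_coe, h𝒢mem]
    rw [hrw]
    exact isClosed_iUnion_of_finite fun g => isClosed_iInter fun l => hpoint _ _
  -- Every `ρ : Gal(K/C)` lifts to an element of 𝒢.
  have hext : ∀ ρ : K ≃ₐ[C] K, ∃ σ : Ω ≃ₐ[C] Ω, ∀ l : L, σ (j l) = j (ρ • l) := by
    intro ρ
    let ψ : L →+* Ω := j.comp (MulSemiringAction.toRingHom (K ≃ₐ[C] K) L ρ)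
    letI algj : Algebra L Ω := j.toAlgebra
    haveI : IsScalarTower K L Ω := IsScalarTower.of_algebraMap_eq fun x => (hjf x).symm
    haveI halgLΩ : Algebra.IsAlgebraic L Ω := Algebra.IsAlgebraic.tower_top (K := K) L
    have hns1 := by
      letI := algj
      exact (Module.isTorsionFree_iff_algebraMap_injective (R := L) (A := Ω)).mpr j.injective
    have hns2 := by
      letI := ψ.toAlgebra
      exact (Module.isTorsionFree_iff_algebraMap_injective (R := L) (A := Ω)).mpr ψ.injective
    let s : @AlgHom L Ω Ω _ _ _ algj ψ.toAlgebra :=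
      @IsAlgClosed.lift Ω _ _ L _ _ Ω _ _ algj ψ.toAlgebra hns1 hns2 halgLΩ
    let sr : Ω →+* Ω := @AlgHom.toRingHom L Ω Ω _ _ _ algj ψ.toAlgebra s
    have hs : ∀ l : L, sr (j l) = j (ρ • l) := fun l =>
      @AlgHom.commutes L Ω Ω _ _ _ algj ψ.toAlgebra s l
    have hsC : ∀ c : C, sr (algebraMap C Ω c) = algebraMap C Ω c := by
      intro c
      have h1 : algebraMap C Ω c = j (f (algebraMap C K c)) := by
        rw [hjf, ← IsScalarTower.algebraMap_apply]
      have h2 : ρ • f (algebraMap C K c) = f (algebraMap C K c) := by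
        rw [← hf, AlgEquiv.smul_def, ρ.commutes]
      rw [h1, hs, h2]
    let σalg : Ω →ₐ[C] Ω := { sr with commutes' := hsC }
    have hbij : Function.Bijective σalg := Algebra.IsAlgebraic.algHom_bijective σalg
    refine ⟨AlgEquiv.ofBijective σalg hbij, fun l => ?_⟩
    show σalg (j l) = j (ρ • l)
    exact hs l
  -- Apply the Frattini hypothesis.
  have h𝒢top : 𝒢 = ⊤ := by
    apply hfrattini 𝒢 h𝒢closed
    intro ρ
    obtain ⟨σ, hσ⟩ := hext ρ
    refine ⟨σ, ⟨ρ, hσ⟩, fun x => ?_⟩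
    have h1 : ρ • f x = f (ρ x) := by rw [← hf]; rfl
    rw [← hjf x, hσ (f x), h1, hjf]
  -- Conclude surjectivity.
  intro l
  -- `j l` is fixed by every `K`-automorphism of `Ω`.
  have hfix : ∀ τ : Ω ≃ₐ[K] Ω, τ (j l) = j l := by
    intro τ
    let σ : Ω ≃ₐ[C] Ω := τ.restrictScalars C
    have hσmem : σ ∈ 𝒢 := h𝒢top ▸ Subgroup.mem_top σ
    obtain ⟨g, hg⟩ := hσmem
    have hg1 : g = 1 := by
      apply AlgEquiv.ext
      intro x
      have h1 : σ (j (f x)) = j (f x) := by rw [hjf x]; exact τ.commutes x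
      have h2 : σ (j (f x)) = j (f (g • x)) := by rw [hg (f x), hf]
      have h3 : g • x = x := f.injective (hjinj (h2.symm.trans h1))
      simpa using h3
    have : τ (j l) = σ (j l) := rfl
    rw [this, hg l, hg1, one_smul]
  -- Hence `j l` lies in the image of `K`, by perfectness.
  haveI : IsAlgClosure K Ω := ⟨inferInstance, inferInstance⟩
  have hyint : IsIntegral K (j l) := (Algebra.IsAlgebraic.isAlgebraic (j l)).isIntegral
  have hsep : (minpoly K (j l)).Separable :=
    PerfectField.separable_of_irreducible (minpoly.irreducible hyint)
  have hsplit : ((minpoly K (j l)).map (algebraMap K Ω)).Splits :=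
    IsAlgClosed.splits _
  have hcard : Fintype.card ((minpoly K (j l)).rootSet Ω) = (minpoly K (j l)).natDegree :=
    Polynomial.card_rootSet_eq_natDegree hsep hsplit
  have hmem : j l ∈ (minpoly K (j l)).rootSet Ω :=
    Polynomial.mem_rootSet.mpr ⟨minpoly.ne_zero hyint, minpoly.aeval K (j l)⟩
  have h1 : Fintype.card ((minpoly K (j l)).rootSet Ω) = 1 := by
    refine Fintype.card_eq_one_iff.mpr ⟨⟨j l, hmem⟩, ?_⟩
    rintro ⟨z, hz⟩
    have hev : Polynomial.aeval z (minpoly K (j l)) = 0 := (Polynomial.mem_rootSet.mp hz).2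
    obtain ⟨τ, hτ⟩ := minpoly.exists_algEquiv_of_root hyint.isAlgebraic hev
    exact Subtype.ext (τ.injective (hτ.trans (hfix τ).symm))
  have hdeg : (minpoly K (j l)).natDegree = 1 := by rw [← hcard, h1]
  obtain ⟨x, hx⟩ := minpoly.natDegree_eq_one_iff.mp hdeg
  exact ⟨x, hjinj (by rw [hjf, hx])⟩
end

section
/- Let K₁ be a field and let K₁ ⊇ K₂ ⊇ K₃ ⊇ ⋯ be a decreasing sequence of subfields of K₁; set K_∞ := ⋂_{n≥1} K_n. Assume that K_∞ is a PAC field. Let A be a finitely generated commutative K_∞-algebra such that for every n ≥ 1 there exists a K_∞-algebra homomorphism A → K_n (where K_n is a K_∞-algebra via the inclusion K_∞ ⊆ K_n). Then there exists a K_∞-algebra homomorphism A → K_∞. (Equivalently: if an affine variety over K_∞ has a K_n-rational point for every n, then it has a K_∞-rational point.) -/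
universe u

open Filter

set_option maxHeartbeats 2000000
set_option synthInstance.maxHeartbeats 1000000

lemma exists_dep_iInf {Ω : Type*} [Field Ω] (L : ℕ → Subfield Ω)
    (hdec : ∀ m n : ℕ, m ≤ n → L n ≤ L m) {κ : Type*} (s : Finset κ) (ε : κ → Ω) :
    (∀ m : ℕ, ∃ c : κ → Ω, (∀ i ∈ s, c i ∈ L m) ∧ (∃ i ∈ s, c i ≠ 0) ∧
      ∑ i ∈ s, c i * ε i = 0) →
    ∃ c : κ → Ω, (∀ i ∈ s, c i ∈ ⨅ n, L n) ∧ (∃ i ∈ s, c i ≠ 0) ∧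
      ∑ i ∈ s, c i * ε i = 0 := by
  classical
  induction s using Finset.induction_on with
  | empty =>
    intro H
    obtain ⟨c, -, ⟨i, hi, -⟩, -⟩ := H 0
    exact absurd hi (by simp)
  | @insert a t hat IH =>
    intro H
    by_cases hc : ∀ m : ℕ, ∃ c : κ → Ω, (∀ i ∈ t, c i ∈ L m) ∧ (∃ i ∈ t, c i ≠ 0) ∧
        ∑ i ∈ t, c i * ε i = 0
    · obtain ⟨c, h1, ⟨i, hi, hne⟩, h3⟩ := IH hc
      refine ⟨fun i => if i ∈ t then c i else 0, ?_, ⟨i, Finset.mem_insert_of_mem hi, ?_⟩, ?_⟩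
      · intro j _
        by_cases hj : j ∈ t
        · simpa [hj] using h1 j hj
        · simp only [hj, if_false]
          exact zero_mem _
      · simpa [hi] using hne
      · rw [Finset.sum_insert hat]
        have he : ∑ j ∈ t, (if j ∈ t then c j else 0) * ε j = ∑ j ∈ t, c j * ε j :=
          Finset.sum_congr rfl fun j hj => by simp [hj]
        simp only [hat, if_false, zero_mul, zero_add]
        rw [he]
        exact h3
    · push_neg at hc
      obtain ⟨m₀, hm₀⟩ := hc
      have hind : ∀ c : κ → Ω, (∀ i ∈ t, c i ∈ L m₀) → ∑ i ∈ t, c i * ε i = 0 →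
          ∀ i ∈ t, c i = 0 := by
        intro c hmem hsum i hi
        by_contra h0
        exact absurd hsum (hm₀ c hmem ⟨i, hi, h0⟩)
      have hd : ∀ m : ℕ, ∃ d : κ → Ω, (∀ i ∈ insert a t, d i ∈ L m ⊓ L m₀) ∧ d a = 1 ∧
          ∑ i ∈ insert a t, d i * ε i = 0 := by
        intro m
        obtain ⟨c, hmem, ⟨i1, hi1, hne⟩, hsum⟩ := H (max m m₀)
        have hmem' : ∀ i ∈ insert a t, c i ∈ L m ⊓ L m₀ := fun i hi =>
          ⟨hdec m _ (le_max_left _ _) (hmem i hi), hdec m₀ _ (le_max_right _ _) (hmem i hi)⟩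
        have hca : c a ≠ 0 := by
          intro hca
          have hsum' : ∑ i ∈ t, c i * ε i = 0 := by
            rw [Finset.sum_insert hat, hca, zero_mul, zero_add] at hsum
            exact hsum
          have hz : ∀ i ∈ t, c i = 0 :=
            hind c (fun i hi => (hmem' i (Finset.mem_insert_of_mem hi)).2) hsum'
          rcases Finset.mem_insert.1 hi1 with rfl | hi1t
          · exact hne hca
          · exact hne (hz i1 hi1t)
        refine ⟨fun i => (c a)⁻¹ * c i, ?_, ?_, ?_⟩
        · intro i hi
          exact Subfield.mul_mem _ (Subfield.inv_mem _ (hmem' a (Finset.mem_insert_self a t)))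
            (hmem' i hi)
        · exact inv_mul_cancel₀ hca
        · show ∑ i ∈ insert a t, ((c a)⁻¹ * c i) * ε i = 0
          have he : ∑ i ∈ insert a t, ((c a)⁻¹ * c i) * ε i
              = (c a)⁻¹ * ∑ i ∈ insert a t, c i * ε i := by
            rw [Finset.mul_sum]
            exact Finset.sum_congr rfl fun i _ => by ring
          rw [he, hsum, mul_zero]
      choose d hdm hda hdsum using hd
      have huniq : ∀ m m' : ℕ, ∀ i ∈ insert a t, d m i = d m' i := by
        intro m m' i hi
        have hmem : ∀ j ∈ t, d m j - d m' j ∈ L m₀ := fun j hj =>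
          Subfield.sub_mem _ ((hdm m j (Finset.mem_insert_of_mem hj)).2)
            ((hdm m' j (Finset.mem_insert_of_mem hj)).2)
        have h1 := hdsum m
        have h2 := hdsum m'
        rw [Finset.sum_insert hat, hda m] at h1
        rw [Finset.sum_insert hat, hda m'] at h2
        have e : ∑ j ∈ t, d m j * ε j = ∑ j ∈ t, d m' j * ε j :=
          add_left_cancel (h1.trans h2.symm)
        have hsum : ∑ j ∈ t, (d m j - d m' j) * ε j = 0 := by
          calc ∑ j ∈ t, (d m j - d m' j) * ε j
              = ∑ j ∈ t, (d m j * ε j - d m' j * ε j) :=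
                Finset.sum_congr rfl fun j _ => sub_mul _ _ _
            _ = ∑ j ∈ t, d m j * ε j - ∑ j ∈ t, d m' j * ε j := Finset.sum_sub_distrib _ _
            _ = 0 := by rw [e, sub_self]
        have hz := hind _ hmem hsum
        rcases Finset.mem_insert.1 hi with rfl | hit
        · rw [hda m, hda m']
        · exact sub_eq_zero.mp (hz i hit)
      refine ⟨fun i => if i ∈ insert a t then d 0 i else 0, ?_,
        ⟨a, Finset.mem_insert_self a t, ?_⟩, ?_⟩
      · intro i hi
        simp only [hi, if_true]
        refine Subfield.mem_iInf.2 fun n => ?_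
        rw [huniq 0 n i hi]
        exact (hdm n i hi).1
      · simp [hda 0]
      · have he : ∑ i ∈ insert a t, (if i ∈ insert a t then d 0 i else 0) * ε i
            = ∑ i ∈ insert a t, d 0 i * ε i := Finset.sum_congr rfl fun i hi => by simp [hi]
        rw [he]
        exact hdsum 0

section PACAux

variable (K1 : Type u) [Field K1] (F : ℕ → Subfield K1)

/-- The intersection field. -/
abbrev EF : Type u := ↥(⨅ n : ℕ, F n)

/-- An algebraic closure of the big field. -/
abbrev OmA : Type u := AlgebraicClosure K1

/-- The ultrapower of `OmA` along the hyperfilter. -/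
abbrev RG : Type u := Filter.Germ ((hyperfilter ℕ : Ultrafilter ℕ) : Filter ℕ) (OmA K1)

/-- Constants embedding into the ultrapower. -/
noncomputable def cRmap : OmA K1 →+* RG K1 :=
  (Germ.coeRingHom _).comp (Pi.ringHom fun _ => RingHom.id _)

noncomputable instance instAlgERG : Algebra (EF K1 F) (RG K1) :=
  Algebra.ofModule
    (fun r x y => Germ.inductionOn₂ x y fun g h => by
      rw [← Germ.coe_smul, ← Germ.coe_mul, ← Germ.coe_mul, ← Germ.coe_smul]
      exact congrArg Germ.ofFun (funext fun n => smul_mul_assoc r (g n) (h n)))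
    (fun r x y => Germ.inductionOn₂ x y fun g h => by
      rw [← Germ.coe_smul, ← Germ.coe_mul, ← Germ.coe_mul, ← Germ.coe_smul]
      exact congrArg Germ.ofFun (funext fun n => mul_smul_comm r (g n) (h n)))

instance instSCCERG : SMulCommClass (EF K1 F) (EF K1 F) (RG K1) :=
  ⟨fun r s x => Germ.inductionOn x fun g => by
    rw [← Germ.coe_smul, ← Germ.coe_smul, ← Germ.coe_smul, ← Germ.coe_smul]
    exact congrArg Germ.ofFun (funext fun n => smul_comm r s (g n))⟩

lemma RG_algebraMap (c : EF K1 F) :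
    algebraMap (EF K1 F) (RG K1) c
      = Germ.ofFun (fun _ => algebraMap (EF K1 F) (OmA K1) c) := by
  rw [Algebra.algebraMap_eq_smul_one]
  have h1 : (1 : RG K1) = Germ.ofFun (fun _ => (1 : OmA K1)) := rfl
  rw [h1, ← Germ.coe_smul]
  congr 1
  funext n
  show c • (1 : OmA K1) = algebraMap (EF K1 F) (OmA K1) c
  exact (Algebra.algebraMap_eq_smul_one _).symm

noncomputable instance instNZSDOm : NoZeroSMulDivisors (EF K1 F) (OmA K1) :=
  inferInstance

noncomputable instance instNZSDEb : NoZeroSMulDivisors (EF K1 F) (AlgebraicClosure (EF K1 F)) :=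
  inferInstance

/-- An embedding of the algebraic closure of `EF K1 F` into `OmA`. -/
noncomputable def jmap : AlgebraicClosure (EF K1 F) →ₐ[EF K1 F] OmA K1 := IsAlgClosed.lift

variable (A : Type u) [CommRing A] [Algebra (EF K1 F) A] (f : ℕ → A →ₐ[EF K1 F] K1)

/-- The map from `A` to the ultrapower induced by the family of points. -/
noncomputable def Phimap : A →+* RG K1 :=
  (Germ.coeRingHom _).comp
    (Pi.ringHom fun n => (algebraMap K1 (OmA K1)).comp (f n).toRingHom)

lemma Phimap_apply (a : A) :
    Phimap K1 F A f a = Germ.ofFun (fun n => algebraMap K1 (OmA K1) (f n a)) := rfl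

lemma Phimap_algebraMap (c : EF K1 F) :
    Phimap K1 F A f (algebraMap (EF K1 F) A c) = algebraMap (EF K1 F) (RG K1) c := by
  rw [RG_algebraMap]
  show Germ.ofFun _ = Germ.ofFun _
  congr 1
  funext n
  show algebraMap K1 (OmA K1) (f n (algebraMap (EF K1 F) A c))
    = algebraMap (EF K1 F) (OmA K1) c
  rw [(f n).commutes]
  rfl

/-- The kernel of `Phimap`. -/
noncomputable def pIdeal : Ideal A := RingHom.ker (Phimap K1 F A f)

/-- The quotient by the kernel. -/
abbrev BQ : Type u := A ⧸ pIdeal K1 F A f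

/-- The induced injection of `BQ` into the ultrapower, as an algebra hom. -/
noncomputable def PsiB : BQ K1 F A f →ₐ[EF K1 F] RG K1 :=
  { (Phimap K1 F A f).kerLift with
    commutes' := by
      intro c
      have h1 : algebraMap (EF K1 F) (BQ K1 F A f) c =
          Ideal.Quotient.mk (pIdeal K1 F A f) (algebraMap (EF K1 F) A c) :=
        ((Ideal.Quotient.mkₐ (EF K1 F) (pIdeal K1 F A f)).commutes c).symm
      show (Phimap K1 F A f).kerLift (algebraMap (EF K1 F) (BQ K1 F A f) c) = _
      rw [h1]
      exact (RingHom.kerLift_mk (Phimap K1 F A f) _).trans (Phimap_algebraMap K1 F A f c) }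

lemma PsiB_mk (a : A) :
    PsiB K1 F A f (Ideal.Quotient.mk (pIdeal K1 F A f) a) = Phimap K1 F A f a :=
  RingHom.kerLift_mk _ a

lemma PsiB_injective : Function.Injective (PsiB K1 F A f) :=
  RingHom.kerLift_injective (Phimap K1 F A f)

/-- The embedding of the algebraic closure of `EF K1 F` into the ultrapower. -/
noncomputable def PsiE : AlgebraicClosure (EF K1 F) →ₐ[EF K1 F] RG K1 :=
  { (cRmap K1).comp (jmap K1 F).toRingHom with
    commutes' := by
      intro c
      show cRmap K1 (jmap K1 F (algebraMap (EF K1 F) (AlgebraicClosure (EF K1 F)) c)) = _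
      rw [(jmap K1 F).commutes, RG_algebraMap]
      rfl }

lemma PsiE_apply (e : AlgebraicClosure (EF K1 F)) :
    PsiE K1 F e = Germ.ofFun (fun _ => jmap K1 F e) := rfl

/-- The product map on the tensor product. -/
noncomputable def PsiT :
    TensorProduct (EF K1 F) (BQ K1 F A f) (AlgebraicClosure (EF K1 F)) →ₐ[EF K1 F] RG K1 :=
  Algebra.TensorProduct.productMap (PsiB K1 F A f) (PsiE K1 F)

lemma PsiT_injective (hdec : ∀ m n : ℕ, m ≤ n → F n ≤ F m)
    (hfmem : ∀ (n : ℕ) (a : A), f n a ∈ F n) :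
    Function.Injective (PsiT K1 F A f) := by
  classical
  let bE := Module.Basis.ofVectorSpace (EF K1 F) (AlgebraicClosure (EF K1 F))
  let eqv : TensorProduct (EF K1 F) (BQ K1 F A f) (AlgebraicClosure (EF K1 F)) ≃ₗ[EF K1 F]
      (↑(Module.Basis.ofVectorSpaceIndex (EF K1 F) (AlgebraicClosure (EF K1 F))) →₀ BQ K1 F A f) :=
    (TensorProduct.congr (LinearEquiv.refl (EF K1 F) (BQ K1 F A f)) bE.repr).trans
      (TensorProduct.finsuppScalarRight (EF K1 F) (EF K1 F) (BQ K1 F A f)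
        (↑(Module.Basis.ofVectorSpaceIndex (EF K1 F) (AlgebraicClosure (EF K1 F)))))
  let Θ : (↑(Module.Basis.ofVectorSpaceIndex (EF K1 F) (AlgebraicClosure (EF K1 F))) →₀ BQ K1 F A f)
      →ₗ[EF K1 F] RG K1 :=
    Finsupp.lsum (EF K1 F) (fun i =>
      (LinearMap.mulRight (EF K1 F) (PsiE K1 F (bE i))).comp (PsiB K1 F A f).toLinearMap)
  have hΘ : ∀ y, Θ y = y.sum fun i b => PsiB K1 F A f b * PsiE K1 F (bE i) := by
    intro y
    rw [Finsupp.lsum_apply]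
    rfl
  have key : ∀ x, PsiT K1 F A f x = Θ (eqv x) := by
    intro x
    induction x using TensorProduct.induction_on with
    | zero => simp
    | tmul b e =>
      have h1 : eqv (b ⊗ₜ[EF K1 F] e) =
          (TensorProduct.finsuppScalarRight (EF K1 F) (EF K1 F) (BQ K1 F A f)
            (↑(Module.Basis.ofVectorSpaceIndex (EF K1 F) (AlgebraicClosure (EF K1 F)))))
            (b ⊗ₜ[EF K1 F] (bE.repr e)) := by
        simp [eqv, TensorProduct.congr_tmul]
      rw [h1, TensorProduct.finsuppScalarRight_apply_tmul, map_finsuppSum]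
      have h2 : ∀ i (n : EF K1 F), Θ (Finsupp.single i (n • b)) =
          algebraMap (EF K1 F) (RG K1) n * (PsiB K1 F A f b * PsiE K1 F (bE i)) := by
        intro i n
        simp only [Θ, Finsupp.lsum_single, LinearMap.coe_comp, Function.comp_apply,
          AlgHom.toLinearMap_apply, LinearMap.mulRight_apply, map_smul]
        rw [Algebra.smul_def]
        try ring
      have hL : (bE.repr e).sum (fun i n => Θ (Finsupp.single i (n • b)))
          = (bE.repr e).sum (fun i n => algebraMap (EF K1 F) (RG K1) n *
              (PsiB K1 F A f b * PsiE K1 F (bE i))) :=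
        Finsupp.sum_congr fun i _ => h2 i _
      rw [hL]
      have h3 : PsiT K1 F A f (b ⊗ₜ[EF K1 F] e) = PsiB K1 F A f b * PsiE K1 F e :=
        Algebra.TensorProduct.productMap_apply_tmul _ _ b e
      rw [h3]
      conv_lhs => rw [← bE.linearCombination_repr e]
      rw [Finsupp.linearCombination_apply, map_finsuppSum, Finsupp.mul_sum]
      refine Finsupp.sum_congr fun i _ => ?_
      rw [map_smul, Algebra.smul_def]
      try ring
    | add x y hx hy => rw [map_add, map_add, map_add, hx, hy]
  have hker : ∀ x, PsiT K1 F A f x = 0 → x = 0 := by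
    intro x hx
    by_contra hx0
    have hy0 : eqv x ≠ 0 := fun h => hx0 (by simpa using eqv.map_eq_zero_iff.mp h)
    obtain ⟨j0, hj0⟩ := Finsupp.ne_iff.mp hy0
    set y := eqv x with hy
    have hj0s : j0 ∈ y.support := Finsupp.mem_support_iff.2 (by simpa using hj0)
    choose aa haa using fun i => Ideal.Quotient.mk_surjective (I := pIdeal K1 F A f) (y i)
    have hterm : ∀ i, PsiB K1 F A f (y i) * PsiE K1 F (bE i) =
        (Germ.coeRingHom ((hyperfilter ℕ : Ultrafilter ℕ) : Filter ℕ))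
          (fun n => algebraMap K1 (OmA K1) (f n (aa i)) * jmap K1 F (bE i)) := by
      intro i
      rw [← haa i, PsiB_mk]
      conv_rhs => rw [show (fun n => algebraMap K1 (OmA K1) (f n (aa i)) * jmap K1 F (bE i))
          = (fun n => algebraMap K1 (OmA K1) (f n (aa i))) * (fun _ => jmap K1 F (bE i))
          from rfl, map_mul]
      rfl
    have hΘy : Θ y = (Germ.coeRingHom ((hyperfilter ℕ : Ultrafilter ℕ) : Filter ℕ))
        (fun n => ∑ i ∈ y.support,
          algebraMap K1 (OmA K1) (f n (aa i)) * jmap K1 F (bE i)) := by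
      rw [hΘ y, Finsupp.sum, Finset.sum_congr rfl fun i _ => hterm i, ← map_sum]
      congr 1
      funext n
      simp [Finset.sum_apply]
    have hS : ∀ᶠ n in ((hyperfilter ℕ : Ultrafilter ℕ) : Filter ℕ),
        ∑ i ∈ y.support, algebraMap K1 (OmA K1) (f n (aa i)) * jmap K1 F (bE i) = 0 := by
      have h0 : (Germ.coeRingHom ((hyperfilter ℕ : Ultrafilter ℕ) : Filter ℕ))
          (fun n => ∑ i ∈ y.support,
            algebraMap K1 (OmA K1) (f n (aa i)) * jmap K1 F (bE i))
          = (Germ.coeRingHom ((hyperfilter ℕ : Ultrafilter ℕ) : Filter ℕ))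
            (0 : ℕ → OmA K1) := by
        rw [map_zero, ← hΘy, ← key x, hx]
      have h1 : (fun n => ∑ i ∈ y.support,
          algebraMap K1 (OmA K1) (f n (aa i)) * jmap K1 F (bE i))
          =ᶠ[((hyperfilter ℕ : Ultrafilter ℕ) : Filter ℕ)] (0 : ℕ → OmA K1) :=
        Germ.coe_eq.mp h0
      exact h1.mono fun n hn => by simpa using hn
    have haj0 : aa j0 ∉ pIdeal K1 F A f := by
      intro hmem
      apply hj0
      show y j0 = 0
      rw [← haa j0, Ideal.Quotient.eq_zero_iff_mem.2 hmem]
    have hnot : ¬ (∀ᶠ n in ((hyperfilter ℕ : Ultrafilter ℕ) : Filter ℕ),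
        algebraMap K1 (OmA K1) (f n (aa j0)) = 0) := by
      intro hcon
      apply haj0
      show Phimap K1 F A f (aa j0) = 0
      rw [Phimap_apply]
      have h2 : Germ.ofFun (fun n => algebraMap K1 (OmA K1) (f n (aa j0)))
          = Germ.ofFun (0 : ℕ → OmA K1) :=
        Germ.coe_eq.mpr (hcon.mono fun n hn => by simpa using hn)
      rw [h2]
      exact map_zero (Germ.coeRingHom ((hyperfilter ℕ : Ultrafilter ℕ) : Filter ℕ))
    have hT : ∀ᶠ n in ((hyperfilter ℕ : Ultrafilter ℕ) : Filter ℕ),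
        algebraMap K1 (OmA K1) (f n (aa j0)) ≠ 0 :=
      Ultrafilter.eventually_not.2 hnot
    have H : ∀ m : ℕ, ∃ c : ↑(Module.Basis.ofVectorSpaceIndex (EF K1 F)
          (AlgebraicClosure (EF K1 F))) → OmA K1, (∀ i ∈ y.support,
          c i ∈ (F m).map (algebraMap K1 (OmA K1))) ∧
        (∃ i ∈ y.support, c i ≠ 0) ∧
        ∑ i ∈ y.support, c i * jmap K1 F (bE i) = 0 := by
      intro m
      have hm : ∀ᶠ n in ((hyperfilter ℕ : Ultrafilter ℕ) : Filter ℕ), m ≤ n := by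
        refine hyperfilter_le_cofinite ?_
        rw [Nat.cofinite_eq_atTop]
        exact Filter.eventually_ge_atTop m
      obtain ⟨n, hn1, hn2, hn3⟩ := (hS.and (hT.and hm)).exists
      refine ⟨fun i => algebraMap K1 (OmA K1) (f n (aa i)), ?_, ⟨j0, hj0s, hn2⟩, hn1⟩
      intro i _
      exact Subfield.mem_map.2 ⟨f n (aa i), hdec m n hn3 (hfmem n (aa i)), rfl⟩
    obtain ⟨c, hcmem, ⟨i1, hi1, hcne⟩, hcsum⟩ :=
      exists_dep_iInf (fun n => (F n).map (algebraMap K1 (OmA K1)))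
        (fun m n hmn x hx => by
          obtain ⟨z, hz, rfl⟩ := Subfield.mem_map.mp hx
          exact Subfield.mem_map.2 ⟨z, hdec m n hmn hz, rfl⟩)
        y.support (fun i => jmap K1 F (bE i)) H
    have hlift : ∀ i, ∃ e : EF K1 F, i ∈ y.support →
        algebraMap K1 (OmA K1) ((e : K1)) = c i := by
      intro i
      by_cases hi : i ∈ y.support
      · have h1 : ∀ n, c i ∈ (F n).map (algebraMap K1 (OmA K1)) :=
          fun n => Subfield.mem_iInf.mp (hcmem i hi) n
        obtain ⟨x0, hx0m, hx0e⟩ := Subfield.mem_map.mp (h1 0)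
        have hx0 : x0 ∈ ⨅ n : ℕ, F n := Subfield.mem_iInf.2 fun n => by
          obtain ⟨xn, hxnm, hxne⟩ := Subfield.mem_map.mp (h1 n)
          have hxx : xn = x0 := (algebraMap K1 (OmA K1)).injective (by rw [hx0e, hxne])
          rwa [hxx] at hxnm
        exact ⟨⟨x0, hx0⟩, fun _ => hx0e⟩
      · exact ⟨0, fun h => absurd h hi⟩
    choose ee hee using hlift
    have hsum2 : (jmap K1 F) (∑ i ∈ y.support, ee i • bE i) = 0 := by
      rw [map_sum, ← hcsum]
      refine Finset.sum_congr rfl fun i hi => ?_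
      rw [Algebra.smul_def, map_mul, (jmap K1 F).commutes, ← hee i hi]
      rfl
    have hz : ∑ i ∈ y.support, ee i • bE i = 0 := by
      apply RingHom.injective (jmap K1 F).toRingHom
      rw [map_zero]
      exact hsum2
    have hz2 := linearIndependent_iff'.mp bE.linearIndependent y.support ee hz i1 hi1
    apply hcne
    rw [← hee i1 hi1, hz2]
    simp
  intro x₁ x₂ hx
  have h := hker (x₁ - x₂) (by rw [map_sub, hx, sub_self])
  exact sub_eq_zero.mp h

end PACAux

/-- A field `F` is pseudo-algebraically closed (PAC) if every finitely generated commutative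
`F`-algebra `A` such that `A ⊗[F] F̄` is an integral domain admits an `F`-algebra
homomorphism to `F`. -/
def IsPAC (F : Type u) [Field F] : Prop :=
  ∀ (A : Type u) [CommRing A] [Algebra F A], Algebra.FiniteType F A →
    IsDomain (TensorProduct F A (AlgebraicClosure F)) → Nonempty (A →ₐ[F] F)

/-- Let `K₁ ⊇ K₂ ⊇ K₃ ⊇ ⋯` be a decreasing sequence of subfields of a field `K₁` whose
intersection `K_∞` is PAC. If a finitely generated commutative `K_∞`-algebra `A` admits a
`K_∞`-algebra homomorphism into each `K_n`, then it admits one into `K_∞`. -/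
theorem exists_point_in_intersection_of_PAC
    (K1 : Type u) [Field K1] (F : ℕ → Subfield K1)
    (hdec : ∀ m n : ℕ, m ≤ n → F n ≤ F m)
    (hPAC : IsPAC ↥(⨅ n : ℕ, F n))
    (A : Type u) [CommRing A] [Algebra ↥(⨅ n : ℕ, F n) A]
    (hfg : Algebra.FiniteType ↥(⨅ n : ℕ, F n) A)
    (hpts : ∀ n : ℕ, ∃ f : A →ₐ[↥(⨅ m : ℕ, F m)] K1, ∀ a : A, f a ∈ F n) :
    ∃ f : A →ₐ[↥(⨅ m : ℕ, F m)] K1, ∀ a : A, f a ∈ (⨅ m : ℕ, F m) := by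
  classical
  choose f hf using hpts
  have hdom : IsDomain (TensorProduct (EF K1 F) (BQ K1 F A f) (AlgebraicClosure (EF K1 F))) :=
    Function.Injective.isDomain (PsiT K1 F A f).toRingHom (PsiT_injective K1 F A f hdec hf)
  have hft : Algebra.FiniteType (EF K1 F) (BQ K1 F A f) :=
    Algebra.FiniteType.of_surjective (Ideal.Quotient.mkₐ (EF K1 F) (pIdeal K1 F A f))
      (Ideal.Quotient.mkₐ_surjective _ _)
  obtain ⟨g⟩ := hPAC (BQ K1 F A f) hft hdom
  refine ⟨((Algebra.ofId (EF K1 F) K1).comp g).comp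
      (Ideal.Quotient.mkₐ (EF K1 F) (pIdeal K1 F A f)), fun a => ?_⟩
  have h1 : (((Algebra.ofId (EF K1 F) K1).comp g).comp
      (Ideal.Quotient.mkₐ (EF K1 F) (pIdeal K1 F A f))) a
      = ((g (Ideal.Quotient.mk (pIdeal K1 F A f) a) : EF K1 F) : K1) := rfl
  rw [h1]
  exact SetLike.coe_mem _
end

section
/- Let D be a divisible abelian group acting on a field K by field automorphisms and let C := K^D be the fixed field. Then C is relatively algebraically closed in K: every element of K that is algebraic over C belongs to C. -/
/-- If a divisible abelian group `D` acts on a field `K` by field automorphisms, then the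
fixed field `C = K^D` is relatively algebraically closed in `K`: every element of `K`
algebraic over `C` belongs to `C`. -/
theorem fixedField_of_divisible_relatively_algebraically_closed
    (D : Type*) [CommGroup D]
    (hdiv : ∀ n : ℕ, 0 < n → ∀ a : D, ∃ b : D, b ^ n = a)
    (K : Type*) [Field K] [MulSemiringAction D K] :
    ∀ x : K, IsAlgebraic (FixedPoints.subfield D K) x → x ∈ FixedPoints.subfield D K := by
  classical
  intro x hx
  obtain ⟨p, hp0, hpx⟩ := hx
  set q : Polynomial K := p.map (algebraMap (FixedPoints.subfield D K) K) with hq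
  have hq0 : q ≠ 0 := Polynomial.map_ne_zero hp0
  have hsmulq : ∀ g : D, g • q = q := by
    intro g
    ext n
    rw [Polynomial.coeff_smul, hq, Polynomial.coeff_map]
    exact (p.coeff n).2 g
  have hroot : ∀ (g : D) (y : K), q.eval y = 0 → q.eval (g • y) = 0 := by
    intro g y hy
    rw [Polynomial.eval_smul', hsmulq, hy, smul_zero]
  set S : Finset K := q.roots.toFinset with hS
  have hmem : ∀ y : K, y ∈ S ↔ q.eval y = 0 := by
    intro y
    rw [hS, Multiset.mem_toFinset, Polynomial.mem_roots hq0]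
    exact Iff.rfl
  have hxS : x ∈ S := by
    rw [hmem]
    rw [hq, Polynomial.eval_map, ← Polynomial.aeval_def]
    exact hpx
  have hinv : ∀ (h : D) (y : K), y ∈ S → h • y ∈ S := by
    intro h y hy
    rw [hmem] at hy ⊢
    exact hroot h y hy
  let σ : D → Equiv.Perm {y // y ∈ S} := fun h =>
    { toFun := fun y => ⟨h • y.1, hinv h y.1 y.2⟩
      invFun := fun y => ⟨h⁻¹ • y.1, hinv h⁻¹ y.1 y.2⟩
      left_inv := fun y => by simp
      right_inv := fun y => by simp }
  have hpow : ∀ (h : D) (n : ℕ) (y : {y // y ∈ S}), ((σ h ^ n) y).1 = h ^ n • y.1 := by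
    intro h n
    induction n with
    | zero => intro y; simp
    | succ n ih =>
      intro y
      rw [pow_succ', Equiv.Perm.mul_apply]
      show h • ((σ h ^ n) y).1 = h ^ (n + 1) • y.1
      rw [ih, ← mul_smul, ← pow_succ']
  set N := Fintype.card (Equiv.Perm {y // y ∈ S}) with hN
  have hNpos : 0 < N := Fintype.card_pos
  show ∀ g : D, g • x = x
  intro g
  obtain ⟨h, hh⟩ := hdiv N hNpos g
  have h1 : σ h ^ N = 1 := pow_card_eq_one
  have := hpow h N ⟨x, hxS⟩
  rw [h1, hh] at this
  simpa using this.symm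
end
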